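/- arXiv:2502.00799 — 6 statements merged into one kernel-verified Lean document; each statement's English description precedes it below -/
import Mathlib

section
/- Let 𝒳 be a collection of subsets of a finite set [d] such that at least one 𝒳-matroid exists. If the refined valuation function v_𝒳 is submodular, then v_𝒳 is the rank function of a matroid, and this matroid is the unique minimal 𝒳-matroid (every 𝒳-matroid N satisfies N ≥ M in the dependency order, i.e., rank_N ≤ v_𝒳 pointwise and every set dependent in M is dependent in N). -/
open Finset

variable {d : ℕ}

/-- A proper 𝒳-sequence: a list of members of 𝒳, each not contained in the union
of the preceding ones. -/
def ProperSeq (𝒳 : Finset (Finset (Fin d))) (l : List (Finset (Fin d))) : Prop :=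
  (∀ x ∈ l, x ∈ 𝒳) ∧ ∀ (i : ℕ) (hi : i < l.length), 1 ≤ i →
    ¬ l.get ⟨i, hi⟩ ⊆ (l.take i).foldr (· ∪ ·) ∅

/-- `val(F, S) = |F ∪ X₁ ∪ ⋯ ∪ X_k| − k`. -/
def seqVal (F : Finset (Fin d)) (l : List (Finset (Fin d))) : ℤ :=
  ((F ∪ l.foldr (· ∪ ·) ∅).card : ℤ) - l.length

/-- `val_𝒳(F)`: the minimum of `val(F,S)` over proper 𝒳-sequences `S`. -/
noncomputable def valX (𝒳 : Finset (Finset (Fin d))) (F : Finset (Fin d)) : ℤ :=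
  sInf {v : ℤ | ∃ l : List (Finset (Fin d)), ProperSeq 𝒳 l ∧ v = seqVal F l}

/-- Condition (i) applies to `v`. -/
def Cond1 (𝒳 : Finset (Finset (Fin d))) (v : Finset (Fin d) → ℤ) : Prop :=
  ∃ A B x : Finset (Fin d), x ∈ 𝒳 ∧ A ∩ B ⊆ x ∧
    v (A ∪ B) > v A + v B - min ((A ∩ B).card : ℤ) ((x.card : ℤ) - 1)

/-- Condition (ii) applies to `v`. -/
def Cond2 (v : Finset (Fin d) → ℤ) : Prop :=
  ∃ A B : Finset (Fin d), A ⊂ B ∧ v A > v B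

/-- Condition (iii) applies to `v`. -/
def Cond3 (v : Finset (Fin d) → ℤ) : Prop :=
  ∃ A B : Finset (Fin d), B ⊂ A ∧ v A > v B + ((A \ B).card : ℤ)

/-- One refinement step of the procedure (with the stated priorities). -/
def RefStep (𝒳 : Finset (Finset (Fin d))) (v w : Finset (Fin d) → ℤ) : Prop :=
  (∃ A B x : Finset (Fin d), x ∈ 𝒳 ∧ A ∩ B ⊆ x ∧
      v (A ∪ B) > v A + v B - min ((A ∩ B).card : ℤ) ((x.card : ℤ) - 1) ∧
      w = Function.update v (A ∪ B)
        (v A + v B - min ((A ∩ B).card : ℤ) ((x.card : ℤ) - 1))) ∨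
  (¬ Cond1 𝒳 v ∧ ∃ A B : Finset (Fin d), A ⊂ B ∧ v A > v B ∧
      w = Function.update v A (v B)) ∨
  (¬ Cond1 𝒳 v ∧ ¬ Cond2 v ∧ ∃ A B : Finset (Fin d), B ⊂ A ∧
      v A > v B + ((A \ B).card : ℤ) ∧
      w = Function.update v A (v B + ((A \ B).card : ℤ)))

/-- `v` is stable: no refinement step applies. -/
def Stable (𝒳 : Finset (Finset (Fin d))) (v : Finset (Fin d) → ℤ) : Prop :=
  ¬ Cond1 𝒳 v ∧ ¬ Cond2 v ∧ ¬ Cond3 v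

/-- `v` is an outcome of the refinement procedure started at `val_𝒳`. -/
def IsRefinedVal (𝒳 : Finset (Finset (Fin d))) (v : Finset (Fin d) → ℤ) : Prop :=
  Relation.ReflTransGen (RefStep 𝒳) (valX 𝒳) v ∧ Stable 𝒳 v

/-- `C` is a circuit of `M`: a minimal dependent set. -/
def IsCircuitOf (M : Matroid (Fin d)) (C : Set (Fin d)) : Prop :=
  M.Dep C ∧ ∀ D : Set (Fin d), D ⊂ C → ¬ M.Dep D

/-- An 𝒳-matroid: a matroid (on the full ground set) in which every member of 𝒳
is a circuit. -/
def IsXMatroid (𝒳 : Finset (Finset (Fin d))) (M : Matroid (Fin d)) : Prop :=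
  M.E = Set.univ ∧ ∀ x ∈ 𝒳, IsCircuitOf M ↑x

/-- `v` is the rank function of the matroid `M`: for every `F`, the maximum size of
an independent subset of `F` equals `v F`. -/
def IsRankFnOf (M : Matroid (Fin d)) (v : Finset (Fin d) → ℤ) : Prop :=
  ∀ F : Finset (Fin d),
    (∃ I : Finset (Fin d), I ⊆ F ∧ M.Indep ↑I ∧ (I.card : ℤ) = v F) ∧
    ∀ I : Finset (Fin d), I ⊆ F → M.Indep ↑I → (I.card : ℤ) ≤ v F

/-- Dependency order on matroids. -/
def depLE (M N : Matroid (Fin d)) : Prop :=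
  ∀ S : Set (Fin d), M.Dep S → N.Dep S


namespace StmtAux


/-- rank of a finset in a matroid on `Fin d`. -/
noncomputable def rk (N : Matroid (Fin d)) (X : Finset (Fin d)) : ℕ :=
  sSup {n : ℕ | ∃ I : Finset (Fin d), I ⊆ X ∧ N.Indep ↑I ∧ I.card = n}

lemma rk_bdd (N : Matroid (Fin d)) (X : Finset (Fin d)) :
    BddAbove {n : ℕ | ∃ I : Finset (Fin d), I ⊆ X ∧ N.Indep ↑I ∧ I.card = n} :=
  ⟨X.card, by rintro n ⟨I, hIX, -, rfl⟩; exact Finset.card_le_card hIX⟩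

lemma rk_ne (N : Matroid (Fin d)) (X : Finset (Fin d)) :
    {n : ℕ | ∃ I : Finset (Fin d), I ⊆ X ∧ N.Indep ↑I ∧ I.card = n}.Nonempty :=
  ⟨0, ∅, by simp, by simp, by simp⟩

lemma card_le_rk {N : Matroid (Fin d)} {I X : Finset (Fin d)} (hIX : I ⊆ X)
    (hI : N.Indep ↑I) : I.card ≤ rk N X :=
  le_csSup (rk_bdd N X) ⟨I, hIX, hI, rfl⟩

lemma rk_attained (N : Matroid (Fin d)) (X : Finset (Fin d)) :
    ∃ I : Finset (Fin d), I ⊆ X ∧ N.Indep ↑I ∧ I.card = rk N X := by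
  have := Nat.sSup_mem (rk_ne N X) (rk_bdd N X)
  exact this

lemma rk_le_card (N : Matroid (Fin d)) (X : Finset (Fin d)) : rk N X ≤ X.card :=
  csSup_le (rk_ne N X) (by rintro n ⟨I, hIX, -, rfl⟩; exact Finset.card_le_card hIX)

lemma rk_mono (N : Matroid (Fin d)) {X Y : Finset (Fin d)} (h : X ⊆ Y) :
    rk N X ≤ rk N Y := by
  obtain ⟨I, hIX, hI, hc⟩ := rk_attained N X
  rw [← hc]; exact card_le_rk (hIX.trans h) hI

lemma rk_indep {N : Matroid (Fin d)} {I : Finset (Fin d)} (hI : N.Indep ↑I) :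
    rk N I = I.card :=
  le_antisymm (rk_le_card N I) (card_le_rk Subset.rfl hI)

lemma rk_dep {N : Matroid (Fin d)} {X : Finset (Fin d)} (hX : ¬ N.Indep ↑X) :
    rk N X < X.card := by
  obtain ⟨I, hIX, hI, hc⟩ := rk_attained N X
  rw [← hc]
  refine Finset.card_lt_card (lt_of_le_of_ne hIX ?_)
  rintro rfl; exact hX hI

lemma exists_extend {N : Matroid (Fin d)} {I X : Finset (Fin d)} (hIX : I ⊆ X)
    (hI : N.Indep ↑I) : ∃ J, I ⊆ J ∧ J ⊆ X ∧ N.Indep ↑J ∧ J.card = rk N X := by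
  by_cases h : I.card = rk N X
  · exact ⟨I, Subset.rfl, hIX, hI, h⟩
  · have hlt : I.card < rk N X := lt_of_le_of_ne (card_le_rk hIX hI) h
    obtain ⟨K, hKX, hK, hKcard⟩ := rk_attained N X
    have hcc : (↑I : Set (Fin d)).encard < (↑K : Set (Fin d)).encard := by
      rw [Set.encard_coe_eq_coe_finsetCard, Set.encard_coe_eq_coe_finsetCard]
      exact_mod_cast hKcard ▸ hlt
    obtain ⟨e, he, hins⟩ := hI.augment hK hcc
    have heK : e ∈ K := by simpa using he.1
    have heI : e ∉ I := by simpa using he.2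
    have hins' : N.Indep ↑(insert e I) := by simpa using hins
    have hcard : (insert e I).card = I.card + 1 := Finset.card_insert_of_notMem heI
    obtain ⟨J, hJ1, hJ2, hJ3, hJ4⟩ :=
      exists_extend (Finset.insert_subset (hKX heK) hIX) hins'
    exact ⟨J, (Finset.subset_insert _ _).trans hJ1, hJ2, hJ3, hJ4⟩
termination_by rk N X - I.card
decreasing_by simp only [Finset.card_insert_of_notMem heI]; omega

lemma rk_unit (N : Matroid (Fin d)) {X Y : Finset (Fin d)} (h : X ⊆ Y) :
    rk N Y ≤ rk N X + (Y \ X).card := by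
  obtain ⟨J, hJY, hJ, hc⟩ := rk_attained N Y
  have h1 : (J ∩ X).card + (J \ X).card = J.card := Finset.card_inter_add_card_sdiff J X
  have h2 : (J ∩ X).card ≤ rk N X :=
    card_le_rk inter_subset_right (hJ.subset (by simp))
  have h3 : (J \ X).card ≤ (Y \ X).card :=
    Finset.card_le_card (Finset.sdiff_subset_sdiff hJY Subset.rfl)
  omega

lemma rk_submod (N : Matroid (Fin d)) (A B : Finset (Fin d)) :
    rk N (A ∪ B) + rk N (A ∩ B) ≤ rk N A + rk N B := by
  obtain ⟨I, hIAB, hI, hIc⟩ := rk_attained N (A ∩ B)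
  obtain ⟨J, hIJ, hJU, hJ, hJc⟩ := exists_extend (hIAB.trans inter_subset_union) hI
  have key : (J ∩ A).card + (J ∩ B).card = J.card + (J ∩ (A ∩ B)).card := by
    have h1 := Finset.card_union_add_card_inter (J ∩ A) (J ∩ B)
    have h2 : (J ∩ A) ∪ (J ∩ B) = J := by
      rw [← Finset.inter_union_distrib_left]
      exact Finset.inter_eq_left.2 hJU
    have h3 : (J ∩ A) ∩ (J ∩ B) = J ∩ (A ∩ B) := by
      ext a; simp only [Finset.mem_inter]; tauto
    rw [h2, h3] at h1
    omega
  have hIle : I.card ≤ (J ∩ (A ∩ B)).card :=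
    Finset.card_le_card (Finset.subset_inter hIJ hIAB)
  have hA : (J ∩ A).card ≤ rk N A := card_le_rk inter_subset_right (hJ.subset (by simp))
  have hB : (J ∩ B).card ≤ rk N B := card_le_rk inter_subset_right (hJ.subset (by simp))
  omega


lemma rz_attained (N : Matroid (Fin d)) (X : Finset (Fin d)) :
    ∃ I : Finset (Fin d), I ⊆ X ∧ N.Indep ↑I ∧ (I.card : ℤ) = (rk N X : ℤ) := by
  obtain ⟨I, h1, h2, h3⟩ := rk_attained N X
  exact ⟨I, h1, h2, by exact_mod_cast h3⟩


/-- integer-valued rank -/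
noncomputable def rz (N : Matroid (Fin d)) (X : Finset (Fin d)) : ℤ := (rk N X : ℤ)

lemma rz_nonneg (N : Matroid (Fin d)) (X : Finset (Fin d)) : 0 ≤ rz N X := Int.ofNat_nonneg _

lemma rz_le_card (N : Matroid (Fin d)) (X : Finset (Fin d)) : rz N X ≤ X.card :=
  Int.ofNat_le.2 (rk_le_card N X)

lemma rz_mono (N : Matroid (Fin d)) {X Y : Finset (Fin d)} (h : X ⊆ Y) : rz N X ≤ rz N Y :=
  Int.ofNat_le.2 (rk_mono N h)

lemma rz_indep {N : Matroid (Fin d)} {I : Finset (Fin d)} (hI : N.Indep ↑I) :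
    rz N I = I.card := by rw [rz, rk_indep hI]

lemma card_le_rz {N : Matroid (Fin d)} {I X : Finset (Fin d)} (hIX : I ⊆ X)
    (hI : N.Indep ↑I) : (I.card : ℤ) ≤ rz N X := Int.ofNat_le.2 (card_le_rk hIX hI)

lemma rz_unit (N : Matroid (Fin d)) {X Y : Finset (Fin d)} (h : X ⊆ Y) :
    rz N Y ≤ rz N X + ((Y \ X).card : ℤ) := by
  have := rk_unit N h; rw [rz, rz]; exact_mod_cast this

lemma rz_submod (N : Matroid (Fin d)) (A B : Finset (Fin d)) :
    rz N (A ∪ B) + rz N (A ∩ B) ≤ rz N A + rz N B := by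
  have := rk_submod N A B; unfold rz; exact_mod_cast this

section Circuits

variable {𝒳 : Finset (Finset (Fin d))} {N : Matroid (Fin d)}

lemma indep_of_not_dep (hE : N.E = Set.univ) {S : Set (Fin d)} (h : ¬ N.Dep S) :
    N.Indep S := by
  rwa [Matroid.not_dep_iff (by rw [hE]; exact Set.subset_univ S)] at h

lemma circuit_not_indep (hN : IsXMatroid 𝒳 N) {x : Finset (Fin d)} (hx : x ∈ 𝒳) :
    ¬ N.Indep ↑x := ((hN.2 x hx).1).1

lemma circuit_ssubset_indep (hN : IsXMatroid 𝒳 N) {x A : Finset (Fin d)} (hx : x ∈ 𝒳)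
    (hA : A ⊂ x) : N.Indep ↑A :=
  indep_of_not_dep hN.1 ((hN.2 x hx).2 ↑A (by exact_mod_cast Finset.coe_ssubset.2 hA))

lemma circuit_rz_le (hN : IsXMatroid 𝒳 N) {x : Finset (Fin d)} (hx : x ∈ 𝒳) :
    rz N x ≤ (x.card : ℤ) - 1 := by
  have := rk_dep (circuit_not_indep hN hx)
  unfold rz; omega

lemma circuit_nonempty (hN : IsXMatroid 𝒳 N) {x : Finset (Fin d)} (hx : x ∈ 𝒳) :
    x.Nonempty := by
  rcases Finset.eq_empty_or_nonempty x with rfl | h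
  · exact absurd (by simpa using N.empty_indep) (circuit_not_indep hN hx)
  · exact h

lemma circuit_rz_ge (hN : IsXMatroid 𝒳 N) {x : Finset (Fin d)} (hx : x ∈ 𝒳) :
    (x.card : ℤ) - 1 ≤ rz N x := by
  obtain ⟨e, he⟩ := circuit_nonempty hN hx
  have hind : N.Indep ↑(x.erase e) :=
    circuit_ssubset_indep hN hx (Finset.erase_ssubset he)
  have := card_le_rz (Finset.erase_subset e x) hind
  rw [Finset.card_erase_of_mem he] at this
  have hc : 1 ≤ x.card := Finset.card_pos.2 ⟨e, he⟩
  omega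

/-- the key Condition-(i)-type inequality for the rank of any 𝒳-matroid -/
lemma rz_cond1 (hN : IsXMatroid 𝒳 N) {A B x : Finset (Fin d)} (hx : x ∈ 𝒳)
    (hABx : A ∩ B ⊆ x) :
    rz N (A ∪ B) ≤ rz N A + rz N B - min ((A ∩ B).card : ℤ) ((x.card : ℤ) - 1) := by
  have hsub := rz_submod N A B
  have hmin : min ((A ∩ B).card : ℤ) ((x.card : ℤ) - 1) ≤ rz N (A ∩ B) := by
    rcases (ssubset_or_eq_of_subset hABx) with h | h
    · have := rz_indep (circuit_ssubset_indep hN hx h)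
      rw [this]; exact min_le_left _ _
    · rw [h]; exact le_trans (min_le_right _ _) (circuit_rz_ge hN hx)
  linarith

/-- rank-drop: adding a circuit not contained in `U` increases nullity. -/
lemma nz_step (hN : IsXMatroid 𝒳 N) {x U : Finset (Fin d)} (hx : x ∈ 𝒳)
    (hxU : ¬ x ⊆ U) :
    ((U.card : ℤ) - rz N U) + 1 ≤ ((U ∪ x).card : ℤ) - rz N (U ∪ x) := by
  obtain ⟨e, hex, heU⟩ := Finset.not_subset.1 hxU
  -- rz (U ∪ x) ≤ rz (U ∪ x.erase e)
  have h1 : rz N (U ∪ x) ≤ rz N (U ∪ x.erase e) := by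
    have hsub := rz_submod N (U ∪ x.erase e) x
    have hU : (U ∪ x.erase e) ∪ x = U ∪ x := by
      rw [Finset.union_assoc, Finset.union_eq_right.2 (Finset.erase_subset e x)]
    have hIn : x.erase e ⊆ (U ∪ x.erase e) ∩ x :=
      Finset.subset_inter Finset.subset_union_right (Finset.erase_subset e x)
    have hindep : N.Indep ↑(x.erase e) := circuit_ssubset_indep hN hx (Finset.erase_ssubset hex)
    have hge : ((x.erase e).card : ℤ) ≤ rz N ((U ∪ x.erase e) ∩ x) := card_le_rz hIn hindep
    have hxle : rz N x ≤ (x.card : ℤ) - 1 := circuit_rz_le hN hx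
    have hcard : ((x.erase e).card : ℤ) = (x.card : ℤ) - 1 := by
      rw [Finset.card_erase_of_mem hex]
      have : 1 ≤ x.card := Finset.card_pos.2 ⟨e, hex⟩
      omega
    rw [hU] at hsub
    linarith
  have h2 : rz N (U ∪ x.erase e) ≤ rz N U + (((U ∪ x.erase e) \ U).card : ℤ) :=
    rz_unit N Finset.subset_union_left
  have h3 : (U ∪ x.erase e) \ U = (x \ U).erase e := by
    ext a
    simp only [Finset.mem_sdiff, Finset.mem_union, Finset.mem_erase]
    tauto
  have h4 : e ∈ x \ U := Finset.mem_sdiff.2 ⟨hex, heU⟩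
  have h5 : ((x \ U).erase e).card = (x \ U).card - 1 := Finset.card_erase_of_mem h4
  have h6 : 1 ≤ (x \ U).card := Finset.card_pos.2 ⟨e, h4⟩
  have h7 : (U ∪ x).card = U.card + (x \ U).card := by
    rw [← Finset.card_union_of_disjoint (Finset.disjoint_sdiff)]
    congr 1
    rw [Finset.union_sdiff_self_eq_union]
  rw [h3] at h2
  have h5' : (((x \ U).erase e).card : ℤ) = ((x \ U).card : ℤ) - 1 := by
    rw [h5]; omega
  have h7' : ((U ∪ x).card : ℤ) = (U.card : ℤ) + ((x \ U).card : ℤ) := by exact_mod_cast h7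
  linarith

end Circuits



/-- the union of a list of finsets -/
def funion (l : List (Finset (Fin d))) : Finset (Fin d) := l.foldr (· ∪ ·) ∅

lemma foldr_union_init (l : List (Finset (Fin d))) (b : Finset (Fin d)) :
    l.foldr (· ∪ ·) b = funion l ∪ b := by
  induction l with
  | nil => simp [funion]
  | cons a l ih => simp [funion, List.foldr_cons, ih, Finset.union_assoc]

lemma funion_append (l₁ l₂ : List (Finset (Fin d))) :
    funion (l₁ ++ l₂) = funion l₁ ∪ funion l₂ := by
  unfold funion
  rw [List.foldr_append, foldr_union_init]
  rfl

lemma funion_singleton (a : Finset (Fin d)) : funion [a] = a := by simp [funion]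

section Seq

variable {𝒳 : Finset (Finset (Fin d))}

lemma properSeq_nil : ProperSeq 𝒳 ([] : List (Finset (Fin d))) :=
  ⟨by simp, fun i hi _ => by simp at hi⟩

lemma properSeq_singleton {a : Finset (Fin d)} (ha : a ∈ 𝒳) : ProperSeq 𝒳 [a] :=
  ⟨by simpa, fun i hi h1 => by simp at hi; omega⟩

lemma properSeq_prefix {l : List (Finset (Fin d))} {a : Finset (Fin d)}
    (h : ProperSeq 𝒳 (l ++ [a])) : ProperSeq 𝒳 l := by
  refine ⟨fun x hx => h.1 x (List.mem_append.2 (Or.inl hx)), fun i hi h1 => ?_⟩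
  have hi' : i < (l ++ [a]).length := by simp; omega
  have := h.2 i hi' h1
  have hget : (l ++ [a]).get ⟨i, hi'⟩ = l.get ⟨i, hi⟩ := by
    simp [List.get_eq_getElem, List.getElem_append_left hi]
  have htake : (l ++ [a]).take i = l.take i := by
    rw [List.take_append, Nat.sub_eq_zero_of_le hi.le]
    simp
  rw [hget, htake] at this
  exact this

lemma properSeq_last {l : List (Finset (Fin d))} {a : Finset (Fin d)}
    (h : ProperSeq 𝒳 (l ++ [a])) (hl : l ≠ []) : ¬ a ⊆ funion l := by
  have hlen : 1 ≤ l.length := List.length_pos_iff.2 hl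
  have hi' : l.length < (l ++ [a]).length := by simp
  have := h.2 l.length hi' hlen
  have hget : (l ++ [a]).get ⟨l.length, hi'⟩ = a := by
    simp [List.get_eq_getElem]
  have htake : (l ++ [a]).take l.length = l := by
    rw [List.take_append]
    simp
  rw [hget, htake] at this
  exact this

lemma nullity_ge {N : Matroid (Fin d)} (hN : IsXMatroid 𝒳 N) (l : List (Finset (Fin d)))
    (hl : ProperSeq 𝒳 l) (hne : l ≠ []) :
    (l.length : ℤ) ≤ ((funion l).card : ℤ) - rz N (funion l) := by
  induction l using List.reverseRecOn with
  | nil => exact absurd rfl hne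
  | append_singleton l a ih =>
    have ha : a ∈ 𝒳 := hl.1 a (by simp)
    rcases List.eq_nil_or_concat' l with rfl | _
    · have := circuit_rz_le hN ha
      simpa [funion_singleton] using by linarith
    · have hlne : l ≠ [] := by rintro rfl; simp_all
      have hpre := properSeq_prefix hl
      have hlast := properSeq_last hl hlne
      have ihl := ih hpre hlne
      have hstep := nz_step hN ha hlast
      rw [funion_append, funion_singleton]
      simp only [List.length_append, List.length_singleton]
      push_cast
      linarith

lemma rz_le_seqVal {N : Matroid (Fin d)} (hN : IsXMatroid 𝒳 N)
    (F : Finset (Fin d)) (l : List (Finset (Fin d))) (hl : ProperSeq 𝒳 l) :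
    rz N F ≤ seqVal F l := by
  rcases eq_or_ne l [] with rfl | hne
  · simpa [seqVal] using rz_le_card N F
  · have h1 := nullity_ge hN l hl hne
    set U := funion l with hU
    have h2 : ((U.card : ℤ) - rz N U) ≤ (((F ∪ U).card : ℤ) - rz N (F ∪ U)) := by
      have := rz_unit N (Finset.subset_union_right : U ⊆ F ∪ U)
      have hcard : ((F ∪ U) \ U).card + U.card = (F ∪ U).card :=
        Finset.card_sdiff_add_card_eq_card Finset.subset_union_right
      push_cast [← hcard]
      linarith
    have h3 : rz N F ≤ rz N (F ∪ U) := rz_mono N Finset.subset_union_left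
    have : seqVal F l = ((F ∪ U).card : ℤ) - l.length := rfl
    rw [this]
    linarith

lemma rz_le_valX {N : Matroid (Fin d)} (hN : IsXMatroid 𝒳 N) (F : Finset (Fin d)) :
    rz N F ≤ valX 𝒳 F := by
  refine le_csInf ⟨seqVal F [], [], properSeq_nil, rfl⟩ ?_
  rintro b ⟨l, hl, rfl⟩
  exact rz_le_seqVal hN F l hl

lemma valX_le {M₀ : Matroid (Fin d)} (hM₀ : IsXMatroid 𝒳 M₀) (F : Finset (Fin d))
    {l : List (Finset (Fin d))} (hl : ProperSeq 𝒳 l) : valX 𝒳 F ≤ seqVal F l := by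
  refine csInf_le ⟨rz M₀ F, ?_⟩ ⟨l, hl, rfl⟩
  rintro b ⟨l', hl', rfl⟩
  exact rz_le_seqVal hM₀ F l' hl'

end Seq



section Chain

variable {𝒳 : Finset (Finset (Fin d))}

lemma refStep_le {u w : Finset (Fin d) → ℤ} (h : RefStep 𝒳 u w) (F : Finset (Fin d)) :
    w F ≤ u F := by
  rcases h with ⟨A, B, x, _, _, hgt, rfl⟩ | ⟨_, A, B, _, hgt, rfl⟩ | ⟨_, _, A, B, _, hgt, rfl⟩ <;>
  · rw [Function.update_apply]
    split
    · next he => subst he; linarith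
    · exact le_refl _

lemma refStep_good {u w : Finset (Fin d) → ℤ} {N : Matroid (Fin d)}
    (hN : IsXMatroid 𝒳 N) (h : RefStep 𝒳 u w) (hu : ∀ F, rz N F ≤ u F)
    (F : Finset (Fin d)) : rz N F ≤ w F := by
  rcases h with ⟨A, B, x, hx, hABx, hgt, rfl⟩ | ⟨_, A, B, hAB, hgt, rfl⟩ |
      ⟨_, _, A, B, hBA, hgt, rfl⟩ <;> rw [Function.update_apply] <;> split
  · next he =>
      subst he
      have := rz_cond1 hN hx hABx
      have h1 := hu A; have h2 := hu B
      linarith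
  · exact hu F
  · next he =>
      subst he
      exact (rz_mono N hAB.subset).trans (hu B)
  · exact hu F
  · next he =>
      subst he
      have := rz_unit N hBA.subset
      have := hu B
      linarith
  · exact hu F

lemma chain_facts {u : Finset (Fin d) → ℤ} {v₀ : Finset (Fin d) → ℤ}
    (h : Relation.ReflTransGen (RefStep 𝒳) v₀ u) :
    (∀ F, u F ≤ v₀ F) ∧
      (∀ N : Matroid (Fin d), IsXMatroid 𝒳 N → (∀ F, rz N F ≤ v₀ F) → ∀ F, rz N F ≤ u F) := by
  induction h with
  | refl => exact ⟨fun _ => le_rfl, fun _ _ h => h⟩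
  | tail _ hstep ih =>
      refine ⟨fun F => (refStep_le hstep F).trans (ih.1 F), fun N hN h0 F => ?_⟩
      exact refStep_good hN hstep (ih.2 N hN h0) F

end Chain

end StmtAux

open StmtAux in
theorem stmt7 (𝒳 : Finset (Finset (Fin d)))
    (hne : ∃ M₀ : Matroid (Fin d), IsXMatroid 𝒳 M₀)
    (v : Finset (Fin d) → ℤ) (hv : IsRefinedVal 𝒳 v)
    (hsub : ∀ A B : Finset (Fin d), v (A ∪ B) + v (A ∩ B) ≤ v A + v B) :
    ∃ M : Matroid (Fin d), IsRankFnOf M v ∧ IsXMatroid 𝒳 M ∧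
      ∀ N : Matroid (Fin d), IsXMatroid 𝒳 N → depLE M N := by
  classical
  obtain ⟨M₀, hM₀⟩ := hne
  obtain ⟨hchain, hC1, hC2, hC3⟩ := hv
  have hle : ∀ F, v F ≤ valX 𝒳 F := (chain_facts hchain).1
  have hge : ∀ N : Matroid (Fin d), IsXMatroid 𝒳 N → ∀ F, rz N F ≤ v F :=
    fun N hN => (chain_facts hchain).2 N hN (fun F => rz_le_valX hN F)
  have hmono : ∀ {A B : Finset (Fin d)}, A ⊆ B → v A ≤ v B := by
    intro A B h
    rcases ssubset_or_eq_of_subset h with h' | rfl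
    · by_contra hc; exact hC2 ⟨A, B, h', by linarith⟩
    · exact le_rfl
  have hunit : ∀ {A B : Finset (Fin d)}, A ⊆ B → v B ≤ v A + ((B \ A).card : ℤ) := by
    intro A B h
    rcases ssubset_or_eq_of_subset h with h' | rfl
    · by_contra hc; exact hC3 ⟨B, A, h', by linarith⟩
    · simp
  have hnonneg : ∀ F, 0 ≤ v F := fun F => le_trans (rz_nonneg M₀ F) (hge M₀ hM₀ F)
  have hv0 : v ∅ = 0 := by
    have h1 : valX 𝒳 ∅ ≤ seqVal (∅ : Finset (Fin d)) [] := valX_le hM₀ ∅ properSeq_nil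
    have h2 : seqVal (∅ : Finset (Fin d)) [] = 0 := by simp [seqVal]
    have h3 := hle ∅
    have h4 := hnonneg ∅
    omega
  have hcard : ∀ F : Finset (Fin d), v F ≤ (F.card : ℤ) := by
    intro F
    have := hunit (Finset.empty_subset F)
    simpa [hv0] using this
  -- spreading lemma
  have hspread : ∀ (I S : Finset (Fin d)), (∀ e ∈ S, v (insert e I) ≤ v I) →
      v (I ∪ S) ≤ v I := by
    intro I S
    induction S using Finset.induction_on with
    | empty => intro _; simp
    | @insert e S he ih =>
      intro hS
      have h1 : v (I ∪ S) ≤ v I := ih (fun f hf => hS f (Finset.mem_insert_of_mem hf))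
      have h2 : v (insert e I) ≤ v I := hS e (Finset.mem_insert_self _ _)
      have hsub2 := hsub (I ∪ S) (insert e I)
      have hU : (I ∪ S) ∪ (insert e I) = I ∪ insert e S := by
        ext a; simp only [Finset.mem_union, Finset.mem_insert]; tauto
      have hIsub : I ⊆ (I ∪ S) ∩ (insert e I) := by
        intro a ha; simp only [Finset.mem_inter, Finset.mem_union, Finset.mem_insert]; tauto
      have h3 := hmono hIsub
      rw [hU] at hsub2
      linarith
  have ind_insert_le : ∀ (I : Finset (Fin d)) (e : Fin d), v (insert e I) ≤ v I + 1 := by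
    intro I e
    have h1 := hunit (Finset.subset_insert e I)
    have h2 : insert e I \ I ⊆ {e} := by
      intro a; simp only [Finset.mem_sdiff, Finset.mem_insert, Finset.mem_singleton]; tauto
    have h3 : ((insert e I \ I).card : ℤ) ≤ 1 := by
      have := Finset.card_le_card h2
      simp only [Finset.card_singleton] at this
      exact_mod_cast this
    linarith
  set Ind : Finset (Fin d) → Prop := fun I => v I = I.card with hIndDef
  have ind_empty : Ind ∅ := by simp [hIndDef, hv0]
  have ind_subset : ∀ ⦃I J : Finset (Fin d)⦄, Ind J → I ⊆ J → Ind I := by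
    intro I J hJ hIJ
    have h1 := hunit hIJ
    have h2 : ((J \ I).card : ℤ) + I.card = J.card := by
      exact_mod_cast Finset.card_sdiff_add_card_eq_card hIJ
    have h3 := hcard I
    simp only [hIndDef] at hJ ⊢
    linarith
  have ind_aug : ∀ ⦃I J : Finset (Fin d)⦄, Ind I → Ind J → I.card < J.card →
      ∃ e ∈ J, e ∉ I ∧ Ind (insert e I) := by
    intro I J hI hJ hlt
    by_contra hcon
    push_neg at hcon
    have hkey : ∀ e ∈ J \ I, v (insert e I) ≤ v I := by
      intro e he
      rw [Finset.mem_sdiff] at he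
      have h1 := ind_insert_le I e
      have h2 : v I ≤ v (insert e I) := hmono (Finset.subset_insert _ _)
      have h3 : ¬ Ind (insert e I) := hcon e he.1 he.2
      have hci : ((insert e I).card : ℤ) = (I.card : ℤ) + 1 := by
        rw [Finset.card_insert_of_notMem he.2]; push_cast; ring
      by_contra hc
      push_neg at hc
      simp only [hIndDef] at hI h3
      exact h3 (by linarith)
    have h4 := hspread I (J \ I) hkey
    have h5 : J ⊆ I ∪ (J \ I) := by
      intro a ha; simp only [Finset.mem_union, Finset.mem_sdiff]; tauto
    have h6 := hmono h5
    simp only [hIndDef] at hI hJ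
    have : (I.card : ℤ) < (J.card : ℤ) := by exact_mod_cast hlt
    linarith
  let mi := IndepMatroid.ofFinset (Set.univ : Set (Fin d)) Ind ind_empty ind_subset ind_aug
    (fun I _ => Set.subset_univ _)
  have hMindep : ∀ I : Finset (Fin d), mi.matroid.Indep ↑I ↔ Ind I := by
    intro I
    rw [IndepMatroid.matroid_indep_iff]
    exact IndepMatroid.ofFinset_indep _ _ _ _ _ _
  have hMindep' : ∀ S : Set (Fin d), mi.matroid.Indep S ↔
      ∀ J : Finset (Fin d), ↑J ⊆ S → Ind J := by
    intro S
    rw [IndepMatroid.matroid_indep_iff]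
    exact IndepMatroid.ofFinset_indep' _ _ _ _ _ _
  have hME : mi.matroid.E = Set.univ := rfl
  refine ⟨mi.matroid, ?_, ?_, ?_⟩
  · -- rank function
    intro F
    obtain ⟨I, hIF, hIind, hIc⟩ := rz_attained mi.matroid F
    have hIv : Ind I := (hMindep I).1 hIind
    have hmax : ∀ e ∈ F \ I, v (insert e I) ≤ v I := by
      intro e he
      rw [Finset.mem_sdiff] at he
      by_contra hc
      push_neg at hc
      have h1 := ind_insert_le I e
      have hci : ((insert e I).card : ℤ) = (I.card : ℤ) + 1 := by
        rw [Finset.card_insert_of_notMem he.2]; push_cast; ring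
      have hIeInd : Ind (insert e I) := by
        simp only [hIndDef] at hIv ⊢
        linarith
      have hIeind : mi.matroid.Indep ↑(insert e I) := (hMindep _).2 hIeInd
      have := card_le_rz (Finset.insert_subset he.1 hIF) hIeind
      unfold rz at this
      rw [← hIc] at this
      omega
    have h4 := hspread I (F \ I) hmax
    rw [Finset.union_sdiff_of_subset hIF] at h4
    have h5 := hmono hIF
    have hvF : (I.card : ℤ) = v F := by
      simp only [hIndDef] at hIv
      linarith
    refine ⟨⟨I, hIF, hIind, hvF⟩, ?_⟩
    intro I' hI'F hI'ind
    have : Ind I' := (hMindep I').1 hI'ind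
    simp only [hIndDef] at this
    rw [← this]
    exact hmono hI'F
  · -- 𝒳-matroid
    refine ⟨hME, fun x hx => ⟨⟨?_, by rw [hME]; exact Set.subset_univ _⟩, ?_⟩⟩
    · -- x is dependent
      rw [hMindep x]
      have h1 : valX 𝒳 x ≤ seqVal x [x] := valX_le hM₀ x (properSeq_singleton hx)
      have h2 : seqVal x [x] = (x.card : ℤ) - 1 := by
        simp [seqVal]
      have h3 := hle x
      simp only [hIndDef]
      intro hcontra
      rw [hcontra] at h3
      omega
    · -- minimality
      intro D hD hDep
      refine hDep.1 ?_
      rw [hMindep']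
      intro J hJD
      have hJx : J ⊂ x := Finset.coe_ssubset.1 (ssubset_of_subset_of_ssubset hJD hD)
      have hJind : M₀.Indep ↑J := circuit_ssubset_indep hM₀ hx hJx
      have h1 : (J.card : ℤ) ≤ v J := by
        have := hge M₀ hM₀ J
        rw [rz_indep hJind] at this
        exact this
      simp only [hIndDef]
      exact le_antisymm (hcard J) h1
  · -- minimal in dependency order
    intro N hN S hS
    refine ⟨fun hNind => ?_, by rw [hN.1]; exact Set.subset_univ S⟩
    have hSfin : S.Finite := Set.toFinite S
    set S' := hSfin.toFinset with hS'def
    have hS' : (↑S' : Set (Fin d)) = S := hSfin.coe_toFinset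
    have h1 : N.Indep ↑S' := by rw [hS']; exact hNind
    have h2 : (S'.card : ℤ) ≤ v S' := by
      have := hge N hN S'
      rw [rz_indep h1] at this
      exact this
    have hIndS' : Ind S' := by
      simp only [hIndDef]
      exact le_antisymm (hcard S') h2
    have : mi.matroid.Indep S := by
      rw [hMindep']
      intro J hJS
      refine ind_subset hIndS' ?_
      rw [← Finset.coe_subset, hS']
      exact hJS
    exact hS.1 this
end

section
/- Let 𝒳 = {{1,4,5},{2,4,5},{1,6,7},{2,6,7},{1,2,3}} on ground set [7]. Then the unique minimal 𝒳-matroid is the uniform matroid U_{2,7}, but val_𝒳([7]) = 3, so val_𝒳 is not the rank function of the unique minimal 𝒳-matroid. In particular, the converse of the Jackson–Tanigawa lemma (that uniqueness of the minimal 𝒳-matroid implies val_𝒳 is the rank function) fails. -/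
open Finset

variable {d : ℕ}

/-- The counterexample family 𝒳 on the ground set `[7]` (with `7` encoded as `0`). -/
def X₀ : Finset (Finset (Fin 7)) :=
  {{1, 4, 5}, {2, 4, 5}, {1, 6, 0}, {2, 6, 0}, {1, 2, 3}}

/-! In an 𝒳-matroid the circuits `{1,4,5}` and `{2,4,5}` put `1` and `2` into the closure of the
independent pair `{4,5}`; since `{1,2} ⊂ {1,2,3}` is independent as well, a rank count gives
`cl {1,2} = cl {4,5}`, and likewise `cl {1,2} = cl {6,0}`, while `3 ∈ cl {1,2}`. So `{1,2}` is a
base, every 𝒳-matroid has rank 2, and `U_{2,7}` lies below all of them.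

The four members of 𝒳 other than `{1,2,3}` are each covered by two of the others, so the last
of them to occur in a proper sequence is covered by its predecessors. Hence proper sequences have
length at most 4 and `val_𝒳([7]) = 7 - 4 = 3`, which exceeds the rank 2. -/

section ProperSeq

variable {𝒳 𝒴 : Finset (Finset (Fin d))} {l : List (Finset (Fin d))} {x : Finset (Fin d)}

lemma mem_foldr_union {α : Type*} [DecidableEq α] {l : List (Finset α)} {a : α} :
    a ∈ l.foldr (· ∪ ·) ∅ ↔ ∃ x ∈ l, a ∈ x := by
  induction l with
  | nil => simp
  | cons y l ih => simp [ih]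

lemma ProperSeq.of_concat (h : ProperSeq 𝒳 (l ++ [x])) : ProperSeq 𝒳 l := by
  refine ⟨fun y hy => h.1 y (List.mem_append_left _ hy), fun i hi hi1 => ?_⟩
  have := h.2 i (by simp; omega) hi1
  rwa [List.get_eq_getElem, List.getElem_append_left hi,
    List.take_append_of_le_length hi.le] at this

lemma ProperSeq.not_subset_of_concat (h : ProperSeq 𝒳 (l ++ [x])) (hl : l ≠ []) :
    ¬ x ⊆ l.foldr (· ∪ ·) ∅ := by
  have := h.2 l.length (by simp) (List.length_pos_iff.2 hl)
  simpa using this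

lemma ProperSeq.nodup (h : ProperSeq 𝒳 l) : l.Nodup := by
  induction l using List.reverseRecOn with
  | nil => simp
  | append_singleton l x ih =>
    refine List.nodup_append.2 ⟨ih h.of_concat, List.nodup_singleton x, ?_⟩
    simp only [List.mem_singleton]
    rintro y hy _ rfl rfl
    exact h.not_subset_of_concat (List.ne_nil_of_mem hy) fun a ha => mem_foldr_union.2 ⟨y, hy, ha⟩

lemma ProperSeq.not_forall_mem (h : ProperSeq 𝒳 l) (h𝒴 : 𝒴.Nonempty) (hempty : ∅ ∉ 𝒴)
    (hcover : ∀ Y ∈ 𝒴, Y ⊆ (𝒴.erase Y).biUnion id) : ¬ ∀ Y ∈ 𝒴, Y ∈ l := by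
  induction l using List.reverseRecOn with
  | nil => obtain ⟨Y, hY⟩ := h𝒴; exact fun hall => by simpa using hall Y hY
  | append_singleton l x ih =>
    intro hall
    have hprev : ∀ Y ∈ 𝒴, Y ≠ x → Y ∈ l := fun Y hY hYx => by
      simpa [hYx] using hall Y hY
    by_cases hx : x ∈ 𝒴
    · have hxl : x ⊆ l.foldr (· ∪ ·) ∅ := fun a ha => by
        obtain ⟨Y, hY, haY⟩ := Finset.mem_biUnion.1 (hcover x hx ha)
        exact mem_foldr_union.2 ⟨Y, hprev Y (mem_of_mem_erase hY) (ne_of_mem_erase hY), haY⟩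
      rcases eq_or_ne l [] with rfl | hl
      · exact hempty (Finset.subset_empty.1 hxl ▸ hx)
      · exact h.not_subset_of_concat hl hxl
    · exact ih h.of_concat fun Y hY => hprev Y hY (ne_of_mem_of_not_mem hY hx)

lemma ProperSeq.length_lt_card (h : ProperSeq 𝒳 l) (h𝒴𝒳 : 𝒴 ⊆ 𝒳) (h𝒴 : 𝒴.Nonempty)
    (hempty : ∅ ∉ 𝒴) (hcover : ∀ Y ∈ 𝒴, Y ⊆ (𝒴.erase Y).biUnion id) :
    l.length < 𝒳.card := by
  rw [← List.toFinset_card_of_nodup h.nodup]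
  refine Finset.card_lt_card ⟨fun y hy => h.1 y (List.mem_toFinset.1 hy), fun hsub => ?_⟩
  exact h.not_forall_mem h𝒴 hempty hcover fun Y hY => List.mem_toFinset.1 (hsub (h𝒴𝒳 hY))

lemma seqVal_univ (l : List (Finset (Fin d))) : seqVal univ l = d - l.length := by
  simp [seqVal, union_eq_left.2 (subset_univ _)]

lemma valX_univ_eq {m : ℕ} (hle : ∀ ⦃l⦄, ProperSeq 𝒳 l → l.length ≤ m)
    (hl : ProperSeq 𝒳 l) (hlm : l.length = m) : valX 𝒳 univ = d - m := by
  refine IsLeast.csInf_eq ⟨⟨l, hl, by rw [seqVal_univ, hlm]⟩, ?_⟩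
  rintro v ⟨l', hl', rfl⟩
  have := hle hl'
  rw [seqVal_univ]
  omega

end ProperSeq

set_option maxRecDepth 10000 in
lemma properSeq_X₀_length_le {l : List (Finset (Fin 7))} (hl : ProperSeq X₀ l) :
    l.length ≤ 4 := by
  have := hl.length_lt_card (𝒴 := X₀.erase {1, 2, 3}) (erase_subset _ _) (by decide) (by decide)
    (by decide)
  exact Nat.le_of_lt_succ this

set_option maxRecDepth 10000 in
lemma valX_X₀_univ : valX X₀ univ = 3 :=
  (valX_univ_eq @properSeq_X₀_length_le (l := [{1, 4, 5}, {2, 4, 5}, {1, 6, 0}, {1, 2, 3}])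
    (by unfold ProperSeq; decide) rfl).trans (by norm_num)

namespace Matroid

variable {α : Type*} {M : Matroid α} {I J : Set α} {a b p q : α}

lemma isCircuit_of_ncard_eq [Finite α] {r : ℕ} (hE : M.E = Set.univ)
    (hM : ∀ S, M.Indep S ↔ S.ncard ≤ r) {C : Set α} (hC : C.ncard = r + 1) : M.IsCircuit C := by
  refine isCircuit_iff_forall_ssubset.2 ⟨⟨fun h => ?_, hE ▸ Set.subset_univ C⟩, fun I hI => ?_⟩
  · have := (hM C).1 h
    omega
  · exact (hM I).2 (by have := Set.ncard_lt_ncard hI; omega)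

lemma Indep.closure_eq_closure_of_subset_closure (hI : M.Indep I) (hJ : M.Indep J)
    (hIJ : I ⊆ M.closure J) (hJfin : J.Finite) (hcard : J.encard ≤ I.encard) :
    M.closure I = M.closure J := by
  obtain ⟨I', hI', hII'⟩ := hI.subset_isBasis_of_subset hIJ
  have hI'card : I'.encard = J.encard := hI'.encard_eq_encard hJ.isBasis_closure
  have hI'fin : I'.Finite := Set.encard_lt_top_iff.1 (hI'card ▸ hJfin.encard_lt_top)
  rw [hI'fin.eq_of_subset_of_encard_le' hII' (hI'card ▸ hcard), hI'.closure_eq_closure,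
    closure_closure]

lemma closure_pair_eq_of_isCircuit (hab : M.Indep {a, b}) (hne : a ≠ b)
    (ha : M.IsCircuit {a, p, q}) (hb : M.IsCircuit {b, p, q})
    (hapq : a ∉ ({p, q} : Set α)) (hbpq : b ∉ ({p, q} : Set α)) :
    M.closure {a, b} = M.closure {p, q} := by
  have hpq : M.Indep {p, q} := by
    simpa [Set.insert_sdiff_self_of_notMem hapq] using ha.sdiff_singleton_indep (Set.mem_insert a _)
  have hmem : ∀ {c}, M.IsCircuit {c, p, q} → c ∉ ({p, q} : Set α) → c ∈ M.closure {p, q} :=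
    fun hc hcpq => by
      simpa [Set.insert_sdiff_self_of_notMem hcpq] using
        hc.mem_closure_sdiff_singleton_of_mem (Set.mem_insert _ _)
  refine hab.closure_eq_closure_of_subset_closure hpq ?_ (Set.toFinite _) ?_
  · exact Set.insert_subset (hmem ha hapq) (Set.singleton_subset_iff.2 (hmem hb hbpq))
  · rw [Set.encard_pair hne]
    exact (Set.encard_insert_le _ _).trans (by norm_num)

end Matroid

lemma isCircuitOf_iff_isCircuit {M : Matroid (Fin d)} {C : Set (Fin d)} :
    IsCircuitOf M C ↔ M.IsCircuit C := by
  rw [Matroid.isCircuit_def, Set.minimal_iff_forall_ssubset]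
  rfl

lemma IsXMatroid.isCircuit {𝒳 : Finset (Finset (Fin d))} {M : Matroid (Fin d)}
    (hM : IsXMatroid 𝒳 M) {x : Finset (Fin d)} (hx : x ∈ 𝒳) : M.IsCircuit ↑x :=
  isCircuitOf_iff_isCircuit.1 (hM.2 x hx)

lemma depLE_of_isBase {U N : Matroid (Fin d)} {B : Set (Fin d)} {r : ℕ}
    (hU : ∀ S, U.Indep S ↔ S.ncard ≤ r) (hNE : N.E = Set.univ) (hB : N.IsBase B)
    (hBr : B.encard = r) : depLE U N := by
  refine fun S hS => ⟨fun hSN => hS.not_indep ((hU S).2 ?_), hNE ▸ Set.subset_univ S⟩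
  obtain ⟨B', hB', hSB'⟩ := hSN.exists_isBase_superset
  have hS : S.encard ≤ r := (Set.encard_mono hSB').trans (hB'.encard_eq_encard_of_isBase hB ▸ hBr).le
  exact (Set.encard_le_coe_iff_finite_ncard_le.1 hS).2

lemma IsRankFnOf.le_of_forall_indep {M : Matroid (Fin d)} {v : Finset (Fin d) → ℤ} {r : ℕ}
    (h : IsRankFnOf M v) (hM : ∀ S, M.Indep S → S.ncard ≤ r) (F : Finset (Fin d)) : v F ≤ r := by
  obtain ⟨I, -, hI, hIcard⟩ := (h F).1
  have := hM I hI
  rw [Set.ncard_coe_finset] at this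
  omega

lemma isBase_one_two_of_isXMatroid_X₀ {N : Matroid (Fin 7)} (hN : IsXMatroid X₀ N) :
    N.IsBase {1, 2} := by
  have hcirc : ∀ x ∈ X₀, N.IsCircuit ↑x := fun x hx => hN.isCircuit hx
  simp only [X₀, mem_insert, mem_singleton, forall_eq_or_imp, forall_eq, coe_insert,
    coe_singleton] at hcirc
  obtain ⟨h145, h245, h160, h260, h123⟩ := hcirc
  have hsub : ∀ X : Set (Fin 7), X ⊆ N.E := fun X => hN.1 ▸ Set.subset_univ X
  have h123_sdiff : ({1, 2, 3} : Set (Fin 7)) \ {3} = {1, 2} := by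
    ext e; fin_cases e <;> simp
  have h12 : N.Indep {1, 2} := h123_sdiff ▸ h123.sdiff_singleton_indep (by simp)
  have h45 := Matroid.closure_pair_eq_of_isCircuit h12 (by decide) h145 h245 (by simp) (by simp)
  have h60 := Matroid.closure_pair_eq_of_isCircuit h12 (by decide) h160 h260 (by simp) (by simp)
  have h3 : (3 : Fin 7) ∈ N.closure {1, 2} :=
    h123_sdiff ▸ h123.mem_closure_sdiff_singleton_of_mem (by simp)
  refine h12.isBase_of_ground_subset_closure fun e _ => ?_
  fin_cases e
  · exact h60 ▸ N.subset_closure _ (hsub _) (by simp)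
  · exact N.subset_closure _ (hsub _) (by simp)
  · exact N.subset_closure _ (hsub _) (by simp)
  · exact h3
  · exact h45 ▸ N.subset_closure _ (hsub _) (by simp)
  · exact h45 ▸ N.subset_closure _ (hsub _) (by simp)
  · exact h60 ▸ N.subset_closure _ (hsub _) (by simp)

theorem stmt8 (U : Matroid (Fin 7)) (hUE : U.E = Set.univ)
    (hU : ∀ S : Set (Fin 7), U.Indep S ↔ S.ncard ≤ 2) :
    -- `U_{2,7}` is an 𝒳-matroid, and it is the unique minimal one:
    IsXMatroid X₀ U ∧ (∀ N : Matroid (Fin 7), IsXMatroid X₀ N → depLE U N) ∧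
    -- yet `val_𝒳([7]) = 3`,
    valX X₀ Finset.univ = 3 ∧
    -- so `val_𝒳` is not the rank function of the unique minimal 𝒳-matroid:
    ¬ IsRankFnOf U (valX X₀) := by
  have hcard : ∀ x ∈ X₀, x.card = 3 := by simp [X₀]
  refine ⟨⟨hUE, fun x hx => isCircuitOf_iff_isCircuit.2 <|
      Matroid.isCircuit_of_ncard_eq hUE hU (by rw [Set.ncard_coe_finset, hcard x hx])⟩,
    fun N hN => depLE_of_isBase hU hN.1 (isBase_one_two_of_isXMatroid_X₀ hN) (Set.encard_pair (by decide)),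
    valX_X₀_univ, fun hrank => ?_⟩
  have := hrank.le_of_forall_indep (fun S hS => (hU S).1 hS) univ
  rw [valX_X₀_univ] at this
  omega
end

section
/- Let M be a realizable point-line configuration on [d] with line set ℒ, and let l ∈ ℒ be a line containing exactly three points. Let N be the rank-3 matroid with no loops whose rank-2 circuits are all pairs {i,j} with i,j ∈ [d]∖l distinct, and whose only 3-element circuit is l (i.e., the points of l are three generic points on a line and all other points coincide at a single point off that line). Then V_N ⊆ V_M. -/
open MvPolynomial Finset

variable {d : ℕ}

/-- A point-line configuration on `[d]`: lines of size ≥ 3 meeting pairwise in ≤ 1 point. -/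
def IsPLC (L : Finset (Finset (Fin d))) : Prop :=
  (∀ l ∈ L, 3 ≤ l.card) ∧ ∀ l ∈ L, ∀ l' ∈ L, l ≠ l' → (l ∩ l').card ≤ 1

/-- Independent sets of the simple rank-≤3 matroid of a point-line configuration. -/
def plcIndep (L : Finset (Finset (Fin d))) (S : Set (Fin d)) : Prop :=
  S.ncard ≤ 3 ∧ (S.ncard = 3 → ¬ ∃ l ∈ L, S ⊆ ↑l)

/-- The vector of point `i` in a tuple `x ∈ ℂ^{3d}`. -/
def vecs (x : Fin d × Fin 3 → ℂ) (i : Fin d) : Fin 3 → ℂ := fun j => x (i, j)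

/-- Zariski closure of a subset of affine space. -/
def zarClosure {ι : Type} (S : Set (ι → ℂ)) : Set (ι → ℂ) :=
  {x | ∀ f : MvPolynomial ι ℂ, (∀ y ∈ S, eval y f = 0) → eval x f = 0}

/-- Realization space of the matroid whose independent sets are given by `P`. -/
def realSpaceP (P : Set (Fin d) → Prop) : Set (Fin d × Fin 3 → ℂ) :=
  {x | ∀ S : Set (Fin d), LinearIndependent ℂ (fun i : S => vecs x i.1) ↔ P S}

/-- Matroid variety: the Zariski closure of the realization space. -/
def varP (P : Set (Fin d) → Prop) : Set (Fin d × Fin 3 → ℂ) :=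
  zarClosure (realSpaceP P)

/-- Circuit variety: tuples of vectors realizing all dependencies. -/
def circuitVarP (P : Set (Fin d) → Prop) : Set (Fin d × Fin 3 → ℂ) :=
  {x | ∀ S : Set (Fin d), ¬ P S → ¬ LinearIndependent ℂ (fun i : S => vecs x i.1)}

/-- Independent sets of the matroid `N` of Lemma `uti`: the three points of `l` are
generic on a line and all other points coincide at a single point off that line
(2-circuits: all pairs outside `l`; only 3-circuit: `l`). -/
def NIndep (l : Finset (Fin d)) (S : Set (Fin d)) : Prop :=
  (S \ ↑l).ncard ≤ 1 ∧ ¬ (↑l ⊆ S)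

/- ------------------ auxiliary lemmas ------------------- -/

lemma comp_eval {σ : Type} (F : σ → Polynomial ℂ) (t : ℂ) (f : MvPolynomial σ ℂ) :
    Polynomial.eval t (aeval F f) = eval (fun v => (F v).eval t) f := by
  induction f using MvPolynomial.induction_on with
  | C a => simp
  | add p q hp hq => simp [hp, hq]
  | mul_X p n hp => simp [hp]

lemma li_cons_iff {a b c : Fin 3 → ℂ} :
    LinearIndependent ℂ ![a, b, c] ↔ LinearIndependent ℂ ![b, c] ∧ a ∉ Submodule.span ℂ {b, c} := by
  rw [show (![a,b,c] : Fin 3 → _) = Fin.cons a ![b,c] from rfl, linearIndependent_fin_cons,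
    Matrix.range_cons_cons_empty]

lemma exists_li_cons {a b : Fin 3 → ℂ} (h : LinearIndependent ℂ ![a, b]) :
    ∃ u, LinearIndependent ℂ ![u, a, b] := by
  classical
  have hlt : Submodule.span ℂ ({a, b} : Set (Fin 3 → ℂ)) < ⊤ := by
    apply span_lt_top_of_card_lt_finrank
    have h2 : ({a, b} : Set (Fin 3 → ℂ)).toFinset.card ≤ 2 := by
      rw [Set.toFinset_insert, Set.toFinset_singleton]
      exact (Finset.card_insert_le _ _).trans (by simp)
    have : Module.finrank ℂ (Fin 3 → ℂ) = 3 := by simp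
    omega
  obtain ⟨u, -, hu⟩ := SetLike.exists_of_lt hlt
  exact ⟨u, li_cons_iff.mpr ⟨h, hu⟩⟩

lemma li_reindex {n : ℕ} (v : Fin d → Fin 3 → ℂ) {e : Fin n → Fin d} (he : Function.Injective e)
    {S : Set (Fin d)} (hS : Set.range e = S) :
    LinearIndependent ℂ (fun i : S => v i.1) ↔ LinearIndependent ℂ (v ∘ e) := by
  let e2 : Fin n ≃ S := (Equiv.ofInjective e he).trans (Equiv.setCongr hS)
  have hcomp : (fun i : S => v i.1) ∘ ⇑e2 = v ∘ e := by
    funext k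
    simp [e2, Equiv.ofInjective, Equiv.setCongr, Equiv.subtypeEquivProp, Equiv.ofLeftInverse,
      Equiv.subtypeEquiv]
  exact (linearIndependent_equiv' e2 hcomp).symm

lemma li_pair (v : Fin d → Fin 3 → ℂ) {p q : Fin d} (hpq : p ≠ q) :
    LinearIndependent ℂ (fun i : ({p, q} : Set (Fin d)) => v i.1) ↔
      LinearIndependent ℂ ![v p, v q] := by
  have he : Function.Injective ![p, q] := by
    intro a b hab; fin_cases a <;> fin_cases b <;> simp_all
  have hr : Set.range ![p, q] = ({p, q} : Set (Fin d)) := Matrix.range_cons_cons_empty p q _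
  rw [li_reindex v he hr]
  have : v ∘ ![p, q] = ![v p, v q] := by
    funext k; fin_cases k <;> simp
  rw [this]

lemma li_triple (v : Fin d → Fin 3 → ℂ) {p q r : Fin d} (hpq : p ≠ q) (hpr : p ≠ r) (hqr : q ≠ r) :
    LinearIndependent ℂ (fun i : ({p, q, r} : Set (Fin d)) => v i.1) ↔
      LinearIndependent ℂ ![v p, v q, v r] := by
  have he : Function.Injective ![p, q, r] := by
    intro a b hab; fin_cases a <;> fin_cases b <;> simp_all
  have hr : Set.range ![p, q, r] = ({p, q, r} : Set (Fin d)) := by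
    rw [Matrix.range_cons, Matrix.range_cons_cons_empty, Set.singleton_union]
  rw [li_reindex v he hr]
  have : v ∘ ![p, q, r] = ![v p, v q, v r] := by
    funext k; fin_cases k <;> simp
  rw [this]

lemma li_single (v : Fin d → Fin 3 → ℂ) (p : Fin d) :
    LinearIndependent ℂ (fun i : ({p} : Set (Fin d)) => v i.1) ↔ v p ≠ 0 := by
  rw [linearIndependent_unique_iff]
  exact Iff.rfl

lemma pair_ne_smul {a b : Fin 3 → ℂ} (h : LinearIndependent ℂ ![a, b]) (c : ℂ) : c • a ≠ b := by
  intro hc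
  have := (LinearIndependent.pair_iff.mp h c (-1) (by rw [← hc]; module)).2
  norm_num at this

lemma li_smul_equiv {S : Set (Fin d)} (c : Fin d → ℂˣ) (T : (Fin 3 → ℂ) ≃ₗ[ℂ] (Fin 3 → ℂ))
    (g : Fin d → Fin 3 → ℂ) :
    LinearIndependent ℂ (fun i : S => (c i.1 : ℂ) • T (g i.1)) ↔
      LinearIndependent ℂ (fun i : S => g i.1) := by
  constructor
  · intro h
    have h2 := h.units_smul (fun i : S => (c i.1)⁻¹)
    have he : ((fun i : S => (c i.1)⁻¹) • fun i : S => (c i.1 : ℂ) • T (g i.1)) =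
        fun i : S => T (g i.1) := by
      funext i
      simp [Pi.smul_apply', Units.smul_def, smul_smul]
    rw [he] at h2
    have h3 := h2.map' T.symm.toLinearMap T.symm.ker
    have he2 : (⇑T.symm.toLinearMap ∘ fun i : S => T (g i.1)) = fun i : S => g i.1 := by
      funext i; simp
    rwa [he2] at h3
  · intro h
    have h2 := (h.map' T.toLinearMap T.ker).units_smul (fun i : S => c i.1)
    have he : ((fun i : S => c i.1) • (T.toLinearMap ∘ fun i : S => g i.1)) =
        fun i : S => (c i.1 : ℂ) • T (g i.1) := by
      funext i
      simp [Pi.smul_apply', Units.smul_def]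
    rwa [he] at h2

theorem stmt9 (L : Finset (Finset (Fin d))) (hL : IsPLC L)
    (hreal : (realSpaceP (plcIndep L)).Nonempty)
    (l : Finset (Fin d)) (hl : l ∈ L) (hl3 : l.card = 3) :
    varP (NIndep l) ⊆ varP (plcIndep L) := by
  classical
  have key : ∀ x ∈ realSpaceP (NIndep l), x ∈ varP (plcIndep L) := by
    intro x hx f hf
    obtain ⟨τ, hτ⟩ := hreal
    obtain ⟨p, q, r, hpq, hpr, hqr, hlpqr⟩ := Finset.card_eq_three.mp hl3
    have hp : p ∈ l := by rw [hlpqr]; simp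
    have hq : q ∈ l := by rw [hlpqr]; simp
    have hr : r ∈ l := by rw [hlpqr]; simp
    have hmeml : ∀ i, i ∈ l ↔ i = p ∨ i = q ∨ i = r := by intro i; rw [hlpqr]; simp
    have hlset : (↑l : Set (Fin d)) = {r, p, q} := by
      ext i; rw [Finset.mem_coe, hmeml]; simp; tauto
    -- τ facts
    have hplc_pair : ∀ a b : Fin d, a ≠ b → plcIndep L {a, b} := by
      intro a b hab
      constructor
      · rw [Set.ncard_pair hab]; omega
      · rw [Set.ncard_pair hab]; omega
    have hTpq : LinearIndependent ℂ ![vecs τ p, vecs τ q] :=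
      (li_pair (vecs τ) hpq).mp ((hτ _).mpr (hplc_pair p q hpq))
    have hTqr : LinearIndependent ℂ ![vecs τ q, vecs τ r] :=
      (li_pair (vecs τ) hqr).mp ((hτ _).mpr (hplc_pair q r hqr))
    have hTpr : LinearIndependent ℂ ![vecs τ p, vecs τ r] :=
      (li_pair (vecs τ) hpr).mp ((hτ _).mpr (hplc_pair p r hpr))
    have hplc_l : ¬ plcIndep L (↑l : Set (Fin d)) := by
      intro hh
      exact hh.2 (by rw [Set.ncard_coe_finset, hl3]) ⟨l, hl, subset_rfl⟩
    have hTdep : ¬ LinearIndependent ℂ ![vecs τ r, vecs τ p, vecs τ q] := by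
      intro h
      apply hplc_l
      rw [hlset]
      exact (hτ _).mp ((li_triple (vecs τ) hpr.symm hqr.symm hpq).mpr h)
    obtain ⟨ra, rb, hrab⟩ : ∃ a b : ℂ, a • vecs τ p + b • vecs τ q = vecs τ r := by
      rcases em (vecs τ r ∈ Submodule.span ℂ {vecs τ p, vecs τ q}) with hm | hm
      · exact Submodule.mem_span_pair.mp hm
      · exact absurd (li_cons_iff.mpr ⟨hTpq, hm⟩) hTdep
    have hra : ra ≠ 0 := by
      intro h0
      exact pair_ne_smul hTqr rb (by rw [← hrab, h0]; module)
    have hrb : rb ≠ 0 := by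
      intro h0
      exact pair_ne_smul hTpr ra (by rw [← hrab, h0]; module)
    have hplc_trip : ∀ j, j ∉ l → plcIndep L {j, p, q} := by
      intro j hj
      have hjp : j ≠ p := fun h => hj (h ▸ hp)
      have hjq : j ≠ q := fun h => hj (h ▸ hq)
      have hnc : ({j, p, q} : Set (Fin d)).ncard = 3 := by
        rw [Set.ncard_insert_of_notMem (by simp [hjp, hjq]), Set.ncard_pair hpq]
      constructor
      · omega
      · rintro - ⟨l', hl', hsub⟩
        by_cases hll : l' = l
        · exact hj (by rw [← hll]; exact_mod_cast hsub (by simp))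
        · have h1 : ({p, q} : Finset (Fin d)) ⊆ l ∩ l' := by
            intro i hi
            rcases Finset.mem_insert.mp hi with rfl | hi
            · exact Finset.mem_inter.mpr ⟨hp, by exact_mod_cast hsub (by simp)⟩
            · rw [Finset.mem_singleton] at hi; subst hi
              exact Finset.mem_inter.mpr ⟨hq, by exact_mod_cast hsub (by simp)⟩
          have h2 := Finset.card_le_card h1
          rw [Finset.card_pair hpq] at h2
          have h3 := hL.2 l hl l' hl' (fun h => hll h.symm)
          omega
    have hTj : ∀ j, j ∉ l → LinearIndependent ℂ ![vecs τ j, vecs τ p, vecs τ q] := by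
      intro j hj
      have hjp : j ≠ p := fun h => hj (h ▸ hp)
      have hjq : j ≠ q := fun h => hj (h ▸ hq)
      exact (li_triple (vecs τ) hjp hjq hpq).mp ((hτ _).mpr (hplc_trip j hj))
    -- x facts
    have hNpair : ∀ a b : Fin d, a ∈ l → b ∈ l → a ≠ b → NIndep l {a, b} := by
      intro a b ha hb hab
      constructor
      · have hd : ({a, b} : Set (Fin d)) \ ↑l = ∅ := by
          apply Set.diff_eq_empty.mpr
          intro i hi
          rcases hi with rfl | hi
          · exact ha
          · simp only [Set.mem_singleton_iff] at hi; subst hi; exact hb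
        rw [hd]; simp
      · intro hsub
        have h1 := Set.ncard_le_ncard hsub (Set.toFinite _)
        rw [Set.ncard_coe_finset, hl3, Set.ncard_pair hab] at h1
        omega
    have hXpq : LinearIndependent ℂ ![vecs x p, vecs x q] :=
      (li_pair (vecs x) hpq).mp ((hx _).mpr (hNpair p q hp hq hpq))
    have hXqr : LinearIndependent ℂ ![vecs x q, vecs x r] :=
      (li_pair (vecs x) hqr).mp ((hx _).mpr (hNpair q r hq hr hqr))
    have hXpr : LinearIndependent ℂ ![vecs x p, vecs x r] :=
      (li_pair (vecs x) hpr).mp ((hx _).mpr (hNpair p r hp hr hpr))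
    have hNl : ¬ NIndep l (↑l : Set (Fin d)) := fun hh => hh.2 subset_rfl
    have hXdep : ¬ LinearIndependent ℂ ![vecs x r, vecs x p, vecs x q] := by
      intro h
      apply hNl
      rw [hlset]
      exact (hx _).mp ((li_triple (vecs x) hpr.symm hqr.symm hpq).mpr h)
    obtain ⟨xa, xb, hxab⟩ : ∃ a b : ℂ, a • vecs x p + b • vecs x q = vecs x r := by
      rcases em (vecs x r ∈ Submodule.span ℂ {vecs x p, vecs x q}) with hm | hm
      · exact Submodule.mem_span_pair.mp hm
      · exact absurd (li_cons_iff.mpr ⟨hXpq, hm⟩) hXdep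
    have hxa : xa ≠ 0 := by
      intro h0
      exact pair_ne_smul hXqr xb (by rw [← hxab, h0]; module)
    have hxb : xb ≠ 0 := by
      intro h0
      exact pair_ne_smul hXpr xa (by rw [← hxab, h0]; module)
    have hNtrip : ∀ j, j ∉ l → NIndep l {j, p, q} := by
      intro j hj
      constructor
      · have hss : ({j, p, q} : Set (Fin d)) \ ↑l ⊆ {j} := by
          intro i hi
          obtain ⟨hi1, hi2⟩ := hi
          rcases hi1 with rfl | hi1
          · exact Set.mem_singleton _
          · rcases hi1 with rfl | hi1
            · exact absurd hp hi2
            · simp only [Set.mem_singleton_iff] at hi1; subst hi1; exact absurd hq hi2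
        have := Set.ncard_le_ncard hss (Set.toFinite _)
        rw [Set.ncard_singleton] at this
        omega
      · intro hsub
        have hrj : r ≠ j := fun h => hj (h ▸ hr)
        have := hsub (Finset.mem_coe.mpr hr)
        rcases this with h | h
        · exact hrj h
        · rcases h with h | h
          · exact hpr h.symm
          · simp only [Set.mem_singleton_iff] at h; exact hqr h.symm
    have hXj : ∀ j, j ∉ l → LinearIndependent ℂ ![vecs x j, vecs x p, vecs x q] := by
      intro j hj
      have hjp : j ≠ p := fun h => hj (h ▸ hp)
      have hjq : j ≠ q := fun h => hj (h ▸ hq)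
      exact (li_triple (vecs x) hjp hjq hpq).mp ((hx _).mpr (hNtrip j hj))
    have hNsingle : ∀ j, j ∉ l → vecs x j ≠ 0 := by
      intro j hj
      apply (li_single (vecs x) j).mp
      apply (hx _).mpr
      constructor
      · have := Set.ncard_le_ncard (Set.diff_subset (s := ({j} : Set (Fin d))) (t := ↑l))
          (Set.toFinite _)
        rw [Set.ncard_singleton] at this
        omega
      · intro hsub
        have := hsub (Finset.mem_coe.mpr hp)
        simp only [Set.mem_singleton_iff] at this
        exact hj (this ▸ hp)
    have hNpairout : ∀ j j', j ∉ l → j' ∉ l → j ≠ j' → ¬ NIndep l {j, j'} := by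
      intro j j' hj hj' hjj hh
      have hd : ({j, j'} : Set (Fin d)) \ ↑l = {j, j'} := by
        ext i
        simp only [Set.mem_diff, Set.mem_insert_iff, Set.mem_singleton_iff, Finset.mem_coe]
        constructor
        · exact fun h => h.1
        · rintro (rfl | rfl)
          · exact ⟨Or.inl rfl, hj⟩
          · exact ⟨Or.inr rfl, hj'⟩
      have := hh.1
      rw [hd, Set.ncard_pair hjj] at this
      omega
    -- the common direction z of all points outside l
    have hzex : ∃ z, LinearIndependent ℂ ![z, vecs x p, vecs x q] ∧
        ∀ j, j ∉ l → ∃ t : ℂ, t ≠ 0 ∧ vecs x j = t • z := by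
      by_cases hout : ∃ j₀, j₀ ∉ l
      · obtain ⟨j₀, hj₀⟩ := hout
        refine ⟨vecs x j₀, hXj j₀ hj₀, fun j hj => ?_⟩
        by_cases hjj : j = j₀
        · exact ⟨1, one_ne_zero, by rw [hjj, one_smul]⟩
        · have hdep : ¬ LinearIndependent ℂ ![vecs x j₀, vecs x j] := by
            intro h
            exact hNpairout j₀ j hj₀ hj (Ne.symm hjj)
              ((hx _).mp ((li_pair (vecs x) (Ne.symm hjj)).mpr h))
          rw [LinearIndependent.pair_iff' (hNsingle j₀ hj₀)] at hdep
          push_neg at hdep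
          obtain ⟨a, ha⟩ := hdep
          exact ⟨a, fun h0 => hNsingle j hj (by rw [← ha, h0, zero_smul]), ha.symm⟩
      · push_neg at hout
        obtain ⟨z, hz⟩ := exists_li_cons hXpq
        exact ⟨z, hz, fun j hj => absurd (hout j) hj⟩
    obtain ⟨z, hzli, hzt⟩ := hzex
    choose! t ht0 htz using hzt
    -- a vector u completing τ_p, τ_q to a basis, and coordinates of the τ_j
    obtain ⟨u, hu⟩ := exists_li_cons hTpq
    have hfr3 : Fintype.card (Fin 3) = Module.finrank ℂ (Fin 3 → ℂ) := by simp
    let B1 := basisOfLinearIndependentOfCardEqFinrank hu hfr3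
    have hB1 : ⇑B1 = ![u, vecs τ p, vecs τ q] := coe_basisOfLinearIndependentOfCardEqFinrank _ _
    have hcoord : ∀ j, j ∉ l →
        ∃ A B D : ℂ, D ≠ 0 ∧ vecs τ j = A • vecs τ p + B • vecs τ q + D • u := by
      intro j hj
      have hex := B1.sum_repr (vecs τ j)
      rw [Fin.sum_univ_three] at hex
      simp only [hB1, Matrix.cons_val_zero, Matrix.cons_val_one, Matrix.head_cons,
        Matrix.cons_val_two, Matrix.tail_cons] at hex
      set c0 := B1.repr (vecs τ j) 0 with hc0
      set c1 := B1.repr (vecs τ j) 1 with hc1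
      set c2 := B1.repr (vecs τ j) 2 with hc2
      refine ⟨c1, c2, c0, ?_, by rw [← hex]; module⟩
      intro hD0
      apply (li_cons_iff.mp (hTj j hj)).2
      apply Submodule.mem_span_pair.mpr
      exact ⟨c1, c2, by rw [← hex, hD0]; module⟩
    choose! A B D hD0 hABD using hcoord
    -- the degeneration curve
    set P0 : Fin 3 → ℂ := (xa / ra) • vecs x p with hP0
    set Q0 : Fin 3 → ℂ := (xb / rb) • vecs x q with hQ0
    set w : Fin d → Fin 3 → ℂ := fun i =>
      if i ∈ l then 0 else ((t i / D i) * A i) • P0 + ((t i / D i) * B i) • Q0 with hwdef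
    have hcurve : ∀ lam : ℂ, lam ≠ 0 →
        (fun ik : Fin d × Fin 3 => x ik + w ik.1 ik.2 * lam) ∈ realSpaceP (plcIndep L) := by
      intro lam hlam
      have hw3 : LinearIndependent ℂ ![z, lam • P0, lam • Q0] := by
        have h2 := hzli.units_smul ![1,
          Units.mk0 (lam * (xa / ra)) (mul_ne_zero hlam (div_ne_zero hxa hra)),
          Units.mk0 (lam * (xb / rb)) (mul_ne_zero hlam (div_ne_zero hxb hrb))]
        have he : ((![1,
            Units.mk0 (lam * (xa / ra)) (mul_ne_zero hlam (div_ne_zero hxa hra)),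
            Units.mk0 (lam * (xb / rb)) (mul_ne_zero hlam (div_ne_zero hxb hrb))] : Fin 3 → ℂˣ) •
            ![z, vecs x p, vecs x q]) = ![z, lam • P0, lam • Q0] := by
          funext i
          fin_cases i <;> simp [hP0, hQ0, Units.smul_def, smul_smul]
        rwa [he] at h2
      let B2 := basisOfLinearIndependentOfCardEqFinrank hw3 hfr3
      have hB2 : ⇑B2 = ![z, lam • P0, lam • Q0] := coe_basisOfLinearIndependentOfCardEqFinrank _ _
      let T := B1.equiv B2 (Equiv.refl _)
      have hTu : T u = z := by
        rw [show u = B1 0 by rw [hB1]; rfl, Module.Basis.equiv_apply]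
        rw [show B2 (Equiv.refl _ 0) = z by rw [Equiv.refl_apply, hB2]; rfl]
      have hTp : T (vecs τ p) = lam • P0 := by
        rw [show vecs τ p = B1 1 by rw [hB1]; rfl, Module.Basis.equiv_apply]
        rw [show B2 (Equiv.refl _ 1) = lam • P0 by rw [Equiv.refl_apply, hB2]; rfl]
      have hTq : T (vecs τ q) = lam • Q0 := by
        rw [show vecs τ q = B1 2 by rw [hB1]; rfl, Module.Basis.equiv_apply]
        rw [show B2 (Equiv.refl _ 2) = lam • Q0 by rw [Equiv.refl_apply, hB2]; rfl]
      set s : Fin d → ℂ := fun i =>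
        if i = p then ra / (lam * xa) else if i = q then rb / (lam * xb)
        else if i = r then 1 / lam else t i / D i with hsdef
      have hil : ∀ i, i ∉ l → i ≠ p ∧ i ≠ q ∧ i ≠ r := fun i hi =>
        ⟨fun h => hi (h ▸ hp), fun h => hi (h ▸ hq), fun h => hi (h ▸ hr)⟩
      have hs : ∀ i, s i ≠ 0 := by
        intro i
        rw [hsdef]
        dsimp only
        split_ifs with h1 h2 h3
        · exact div_ne_zero hra (mul_ne_zero hlam hxa)
        · exact div_ne_zero hrb (mul_ne_zero hlam hxb)
        · exact one_div_ne_zero hlam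
        · have hi : i ∉ l := by rw [hmeml]; tauto
          exact div_ne_zero (ht0 i hi) (hD0 i hi)
      have hkey : ∀ i, vecs (fun ik : Fin d × Fin 3 => x ik + w ik.1 ik.2 * lam) i
          = s i • T (vecs τ i) := by
        intro i
        have hveq : vecs (fun ik : Fin d × Fin 3 => x ik + w ik.1 ik.2 * lam) i
            = vecs x i + lam • w i := by
          funext k
          simp [vecs]
          ring
        rw [hveq]
        by_cases hi : i ∈ l
        · have hw0 : w i = 0 := by rw [hwdef]; exact if_pos hi
          rw [hw0, smul_zero, add_zero]
          rcases (hmeml i).mp hi with rfl | rfl | rfl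
          · rw [hTp, show s i = ra / (lam * xa) by rw [hsdef]; exact if_pos rfl, hP0]
            match_scalars
            field_simp
          · rw [hTq, show s i = rb / (lam * xb) by
              rw [hsdef]; simp [hpq.symm], hQ0]
            match_scalars
            field_simp
          · have hTr : T (vecs τ i) = ra • (lam • P0) + rb • (lam • Q0) := by
              rw [← hrab, map_add, map_smul, map_smul, hTp, hTq]
            rw [hTr, show s i = 1 / lam by rw [hsdef]; simp [hpr.symm, hqr.symm], ← hxab,
              hP0, hQ0]
            match_scalars <;> field_simp
        · obtain ⟨hip, hiq, hir⟩ := hil i hi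
          have hw : w i = ((t i / D i) * A i) • P0 + ((t i / D i) * B i) • Q0 := by
            rw [hwdef]; exact if_neg hi
          have hvx : vecs x i = t i • z := htz i hi
          have hTt : T (vecs τ i) = A i • (lam • P0) + B i • (lam • Q0) + D i • z := by
            rw [hABD i hi, map_add, map_add, map_smul, map_smul, map_smul, hTp, hTq, hTu]
          have hsi : s i = t i / D i := by rw [hsdef]; simp [hip, hiq, hir]
          rw [hw, hvx, hTt, hsi, hP0, hQ0]
          have hDi := hD0 i hi
          match_scalars <;> field_simp <;> ring
      intro S
      have heqS : (fun i : S => vecs (fun ik : Fin d × Fin 3 => x ik + w ik.1 ik.2 * lam) i.1)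
          = fun i : S => ((fun i => Units.mk0 (s i) (hs i)) i.1 : ℂ) • T (vecs τ i.1) := by
        funext i
        exact hkey i.1
      rw [heqS]
      exact (li_smul_equiv (fun i => Units.mk0 (s i) (hs i)) T (vecs τ)).trans (hτ S)
    -- polynomial argument
    set F : Fin d × Fin 3 → Polynomial ℂ := fun ik =>
      Polynomial.C (x ik) + Polynomial.C (w ik.1 ik.2) * Polynomial.X with hFdef
    have hFeval : ∀ lam : ℂ,
        (fun ik => (F ik).eval lam) = fun ik : Fin d × Fin 3 => x ik + w ik.1 ik.2 * lam := by
      intro lam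
      funext ik
      simp [hFdef]
    have hgz : ∀ lam : ℂ, lam ≠ 0 → (MvPolynomial.aeval F f).eval lam = 0 := by
      intro lam hlam
      rw [comp_eval, hFeval]
      exact hf _ (hcurve lam hlam)
    have hg0 : MvPolynomial.aeval F f = 0 := by
      apply Polynomial.eq_zero_of_infinite_isRoot
      exact ((Set.finite_singleton (0 : ℂ)).infinite_compl).mono fun tt htt => hgz tt htt
    have h0 : MvPolynomial.eval (fun ik : Fin d × Fin 3 => x ik + w ik.1 ik.2 * 0) f = 0 := by
      rw [← hFeval, ← comp_eval, hg0]
      simp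
    have hx0 : (fun ik : Fin d × Fin 3 => x ik + w ik.1 ik.2 * 0) = x := by
      funext ik
      simp
    rw [hx0] at h0
    exact h0
  intro y hy f hf
  exact hy f fun x hx => key x hx f hf
end

section
/- The quadrilateral set QS, the point-line configuration on [6] with lines {1,2,3}, {1,5,6}, {2,4,6}, {3,4,5}, has every proper submatroid nilpotent and every point of degree 2; consequently its circuit variety decomposes as V_{C(QS)} = V_{QS} ∪ V_{U_{2,6}}. -/
open MvPolynomial Finset

variable {d : ℕ}


/-- Restriction of a line set to a subset of the ground set: lines are the traces
of size at least 3. -/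
def restrictLines [DecidableEq (Fin d)] (L : Finset (Finset (Fin d))) (A : Finset (Fin d)) :
    Finset (Finset (Fin d)) :=
  (L.image (· ∩ A)).filter (fun l => 3 ≤ l.card)

/-- Degree of a point: the number of lines containing it. -/
def degreeOf (L : Finset (Finset (Fin d))) (p : Fin d) : ℕ :=
  (L.filter (fun l => p ∈ l)).card

/-- One step of the nilpotency chain: restrict to the points lying on ≥ 2 lines. -/
def plcStep (P : Finset (Fin d) × Finset (Finset (Fin d))) :
    Finset (Fin d) × Finset (Finset (Fin d)) :=
  let A := P.1.filter (fun p => 2 ≤ degreeOf P.2 p)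
  (A, restrictLines P.2 A)

/-- A configuration (ground set together with lines) is nilpotent if the chain
`M, S_M, S_{S_M}, …` reaches the empty configuration. -/
def Nilpotent (P : Finset (Fin d) × Finset (Finset (Fin d))) : Prop :=
  ∃ j : ℕ, (plcStep^[j] P).1 = ∅

/-- The quadrilateral set on `[6]` (with `6` encoded as `0`):
lines `{1,2,3}, {1,5,6}, {2,4,6}, {3,4,5}`. -/
def QS : Finset (Finset (Fin 6)) := {{1, 2, 3}, {1, 5, 0}, {2, 4, 0}, {3, 4, 5}}

/-- Independent sets of the uniform matroid `U_{2,6}`. -/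
def U26Indep (S : Set (Fin 6)) : Prop := S.ncard ≤ 2

/-!
Both varieties on the right lie in the circuit variety, since that variety is cut out by the
triple products of the collinear triples. Conversely, a point of the circuit variety has rank at
most 2 or rank 3, and in each case it is the value at `t = 0` of a polynomial curve `γ` such that
`γ t` realizes `U_{2,6}`, resp. QS, for all but finitely many `t`; a polynomial vanishing on the
realizations then vanishes on `γ` identically, so `γ 0` lies in the Zariski closure.

In rank at most 2 the six vectors lie in a plane, and moving each of them inside that plane along
its own direction, the six directions pairwise independent, makes them pairwise independent.

In rank 3 every line `ℓ` of QS has a normal vector `n ℓ`, and no three normals are parallel (the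
six points would then span a plane). Deform the normals as `n ℓ + t m ℓ + t² g ℓ` with `g` in
general position, and let each point follow the cross product of the normals of its two lines,
divided by `t` when these two normals are parallel at `t = 0`; the corrections `m` are chosen so
that the limit at `t = 0` is the given point. The triple product of three such cross products
expands into triple products of the deformed normals, which are nonzero for almost all `t` because
their coefficient of `t⁶` is a triple product of the `g`.
-/

open Matrix

namespace QuadrilateralSet

section LinearAlgebra

theorem eq_iff_eq_zero_and_eq_zero {M : Type*} [Zero M] {x y : M} (h : ¬ (x ≠ 0 ∧ y ≠ 0)) :
    x = y ↔ x = 0 ∧ y = 0 := by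
  constructor
  · rintro rfl
    have hx : x = 0 := by
      by_contra hx
      exact h ⟨hx, hx⟩
    exact ⟨hx, hx⟩
  · rintro ⟨rfl, rfl⟩
    rfl

variable {K : Type*} [Field K]

theorem linearIndependent_vec3_iff (u v w : Fin 3 → K) :
    LinearIndependent K ![u, v, w] ↔ u ⬝ᵥ v ⨯₃ w ≠ 0 := by
  rw [triple_product_eq_det]
  exact linearIndependent_rows_iff_isUnit.trans ((isUnit_iff_isUnit_det _).trans isUnit_iff_ne_zero)

theorem triple_product_eq_zero_iff (u v w : Fin 3 → K) :
    u ⬝ᵥ v ⨯₃ w = 0 ↔ ∃ n ≠ 0, u ⬝ᵥ n = 0 ∧ v ⬝ᵥ n = 0 ∧ w ⬝ᵥ n = 0 := by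
  rw [triple_product_eq_det]
  refine (exists_mulVec_eq_zero_iff (M := of ![u, v, w])).symm.trans ?_
  refine exists_congr fun n => and_congr_right fun _ => ?_
  simp [funext_iff, Fin.forall_fin_succ]

theorem triple_product_smul (a b c : K) (u v w : Fin 3 → K) :
    (a • u) ⬝ᵥ (b • v) ⨯₃ (c • w) = a * b * c * (u ⬝ᵥ v ⨯₃ w) := by
  simp only [map_smul, LinearMap.smul_apply, smul_dotProduct, dotProduct_smul, smul_eq_mul]
  ring

theorem triple_product_cross (a₁ a₂ b₁ b₂ c₁ c₂ : Fin 3 → K) :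
    (a₁ ⨯₃ a₂) ⬝ᵥ (b₁ ⨯₃ b₂) ⨯₃ (c₁ ⨯₃ c₂) =
      (a₁ ⬝ᵥ a₂ ⨯₃ b₂) * (b₁ ⬝ᵥ c₁ ⨯₃ c₂) - (a₁ ⬝ᵥ a₂ ⨯₃ b₁) * (b₂ ⬝ᵥ c₁ ⨯₃ c₂) := by
  rw [cross_cross_eq_smul_sub_smul, dotProduct_sub, dotProduct_smul, dotProduct_smul,
    smul_eq_mul, smul_eq_mul, dotProduct_comm (a₁ ⨯₃ a₂) b₂, dotProduct_comm (a₁ ⨯₃ a₂) b₁,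
    ← triple_product_permutation, ← triple_product_permutation b₁, ← triple_product_permutation b₂]
  ring

theorem exists_dotProduct_ne_zero {v : Fin 3 → K} (hv : v ≠ 0) : ∃ w, v ⬝ᵥ w ≠ 0 := by
  obtain ⟨k, hk⟩ := Function.ne_iff.1 hv
  exact ⟨Pi.single k 1, by simpa [dotProduct_single] using hk⟩

theorem exists_cross_ne_zero {v : Fin 3 → K} (hv : v ≠ 0) : ∃ w, v ⨯₃ w ≠ 0 := by
  obtain ⟨w, hw⟩ := exists_linearIndependent_pair_of_one_lt_finrank (R := K)
    (by rw [Module.finrank_fin_fun]; norm_num) hv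
  exact ⟨w, crossProduct_ne_zero_iff_linearIndependent.2 hw⟩

theorem exists_cross_eq {n v : Fin 3 → K} (hn : n ≠ 0) (hv : v ⬝ᵥ n = 0) :
    ∃ u, n ⨯₃ u = v := by
  obtain ⟨w, hw⟩ := exists_dotProduct_ne_zero hn
  refine ⟨(n ⬝ᵥ w)⁻¹ • v ⨯₃ w, ?_⟩
  rw [map_smul, cross_cross_eq_smul_sub_smul', hv, zero_smul, sub_zero, smul_smul,
    inv_mul_cancel₀ hw, one_smul]

theorem exists_smul_eq_of_cross_eq_zero {a b : Fin 3 → K} (ha : a ≠ 0) (h : a ⨯₃ b = 0) :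
    ∃ c : K, c • a = b := by
  by_contra! hc
  exact crossProduct_ne_zero_iff_linearIndependent.2 ((LinearIndependent.pair_iff' ha).2 hc) h

theorem exists_eq_smul_cross {a b x : Fin 3 → K} (hab : a ⨯₃ b ≠ 0) (ha : x ⬝ᵥ a = 0)
    (hb : x ⬝ᵥ b = 0) : ∃ c : K, x = c • a ⨯₃ b := by
  obtain ⟨c, hc⟩ := exists_smul_eq_of_cross_eq_zero hab (by
    rw [cross_cross_eq_smul_sub_smul, dotProduct_comm, ha, dotProduct_comm, hb, zero_smul,
      zero_smul, sub_zero])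
  exact ⟨c, hc.symm⟩

theorem dotProduct_eq_zero_of_cross_eq_zero {a b v : Fin 3 → K} (hb : b ≠ 0) (hab : a ⨯₃ b = 0)
    (hv : v ⬝ᵥ b = 0) : v ⬝ᵥ a = 0 := by
  rcases eq_or_ne a 0 with rfl | ha
  · exact dotProduct_zero v
  obtain ⟨c, rfl⟩ := exists_smul_eq_of_cross_eq_zero ha hab
  rw [dotProduct_smul, smul_eq_mul] at hv
  exact (mul_eq_zero.1 hv).resolve_left (by rintro rfl; simp at hb)

theorem cross_eq_zero_comm {a b : Fin 3 → K} : a ⨯₃ b = 0 ↔ b ⨯₃ a = 0 := by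
  rw [← cross_anticomm, neg_eq_zero]

theorem cross_cross_cross_self (n a b : Fin 3 → K) :
    (n ⨯₃ a) ⨯₃ (n ⨯₃ b) = (n ⬝ᵥ a ⨯₃ b) • n := by
  rw [cross_cross_eq_smul_sub_smul, dot_self_cross, zero_smul, zero_sub, ← neg_smul,
    triple_product_permutation, ← cross_anticomm, dotProduct_neg, neg_neg]

end LinearAlgebra

section IndependentSets

variable {K : Type*} [Field K] {ι : Type*} {v : ι → Fin 3 → K}

theorem linearIndepOn_triple_iff {a b c : ι} (hab : a ≠ b) (hac : a ≠ c) (hbc : b ≠ c) :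
    LinearIndepOn K v {a, b, c} ↔ v a ⬝ᵥ v b ⨯₃ v c ≠ 0 := by
  have hinj : Function.Injective ![a, b, c] := by
    intro i j
    fin_cases i <;> fin_cases j <;> simp [hab, hac, hbc, hab.symm, hac.symm, hbc.symm]
  have hrange : Set.range ![a, b, c] = {a, b, c} := by
    ext x
    simp only [Set.mem_range, Fin.exists_fin_succ, Set.mem_insert_iff, Set.mem_singleton_iff]
    simp [eq_comm]
  have hcomp : v ∘ ![a, b, c] = ![v a, v b, v c] := by
    ext i : 1
    fin_cases i <;> rfl
  rw [← hrange, linearIndepOn_range_iff hinj, hcomp, linearIndependent_vec3_iff]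

theorem linearIndepOn_pair_iff_cross_ne_zero {a b : ι} (hab : a ≠ b) :
    LinearIndepOn K v {a, b} ↔ v a ⨯₃ v b ≠ 0 := by
  have hinj : Function.Injective ![a, b] := by
    intro i j
    fin_cases i <;> fin_cases j <;> simp [hab, hab.symm]
  have hrange : Set.range ![a, b] = {a, b} := by
    ext x
    simp only [Set.mem_range, Fin.exists_fin_succ, Set.mem_insert_iff, Set.mem_singleton_iff]
    simp [eq_comm]
  have hcomp : v ∘ ![a, b] = ![v a, v b] := by
    ext i : 1
    fin_cases i <;> rfl
  rw [← hrange, linearIndepOn_range_iff hinj, hcomp, crossProduct_ne_zero_iff_linearIndependent]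

theorem not_linearIndepOn_of_three_lt_ncard {S : Set ι} (hS : 3 < S.ncard) :
    ¬ LinearIndepOn K v S := by
  intro h
  have hfin : S.Finite := Set.finite_of_ncard_pos (by omega)
  have := h.encard_le_toENat_rank
  rw [rank_fin_fun, ← hfin.cast_ncard_eq] at this
  norm_num at this
  omega

theorem exists_subset_pair [Nontrivial ι] {S : Set ι} (hS : S.ncard ≤ 2) (hfin : S.Finite) :
    ∃ a b, a ≠ b ∧ S ⊆ {a, b} := by
  obtain h | h | h : S.ncard = 0 ∨ S.ncard = 1 ∨ S.ncard = 2 := by omega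
  · obtain ⟨a, b, hab⟩ := exists_pair_ne ι
    exact ⟨a, b, hab, by simp [(Set.ncard_eq_zero hfin).1 h]⟩
  · obtain ⟨a, rfl⟩ := Set.ncard_eq_one.1 h
    obtain ⟨b, hb⟩ := exists_ne a
    exact ⟨a, b, hb.symm, by simp⟩
  · obtain ⟨a, b, hab, rfl⟩ := Set.ncard_eq_two.1 h
    exact ⟨a, b, hab, subset_rfl⟩

end IndependentSets

section Realizations

def Distinct3 {α : Type*} (a b c : α) : Prop := a ≠ b ∧ a ≠ c ∧ b ≠ c

instance {α : Type*} [DecidableEq α] (a b c : α) : Decidable (Distinct3 a b c) := by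
  unfold Distinct3
  infer_instance

def OnLine (L : Finset (Finset (Fin d))) (a b c : Fin d) : Prop :=
  ∃ l ∈ L, a ∈ l ∧ b ∈ l ∧ c ∈ l

instance (L : Finset (Finset (Fin d))) (a b c : Fin d) : Decidable (OnLine L a b c) := by
  unfold OnLine
  infer_instance

theorem onLine_iff_subset {L : Finset (Finset (Fin d))} {a b c : Fin d} :
    OnLine L a b c ↔ ∃ l ∈ L, ({a, b, c} : Set (Fin d)) ⊆ ↑l := by
  simp [OnLine, Set.insert_subset_iff]

theorem mem_circuitVarP_plcIndep_iff {L : Finset (Finset (Fin d))} {x : Fin d × Fin 3 → ℂ} :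
    x ∈ circuitVarP (plcIndep L) ↔ ∀ a b c, Distinct3 a b c → OnLine L a b c →
      vecs x a ⬝ᵥ vecs x b ⨯₃ vecs x c = 0 := by
  constructor
  · rintro hx a b c ⟨hab, hac, hbc⟩ hon
    have hdep : ¬ LinearIndepOn ℂ (vecs x) {a, b, c} := hx {a, b, c} fun ⟨_, h⟩ =>
      h (Set.ncard_eq_three.2 ⟨a, b, c, hab, hac, hbc, rfl⟩) (onLine_iff_subset.1 hon)
    rwa [linearIndepOn_triple_iff hab hac hbc, not_not] at hdep
  · intro hx S hS (hLI : LinearIndepOn ℂ (vecs x) S)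
    by_cases h3 : S.ncard ≤ 3
    · obtain ⟨hcard, l, hl, hSl⟩ : S.ncard = 3 ∧ ∃ l ∈ L, S ⊆ ↑l := by
        simpa [plcIndep, h3] using hS
      obtain ⟨a, b, c, hab, hac, hbc, rfl⟩ := Set.ncard_eq_three.1 hcard
      exact (linearIndepOn_triple_iff hab hac hbc).1 hLI
        (hx a b c ⟨hab, hac, hbc⟩ (onLine_iff_subset.2 ⟨l, hl, hSl⟩))
    · exact not_linearIndepOn_of_three_lt_ncard (by omega) hLI

theorem realSpaceP_subset_circuitVarP {P Q : Set (Fin d) → Prop} (hPQ : ∀ S, P S → Q S) :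
    realSpaceP P ⊆ circuitVarP Q :=
  fun _ hy S hQ hLI => hQ (hPQ S ((hy S).1 hLI))

noncomputable def triplePoly (a b c : Fin d) : MvPolynomial (Fin d × Fin 3) ℂ :=
  (fun k => X (a, k)) ⬝ᵥ (fun k => X (b, k)) ⨯₃ (fun k => X (c, k))

theorem eval_triplePoly (y : Fin d × Fin 3 → ℂ) (a b c : Fin d) :
    eval y (triplePoly a b c) = vecs y a ⬝ᵥ vecs y b ⨯₃ vecs y c := by
  simp [triplePoly, vecs, dotProduct, cross_apply, Fin.sum_univ_three]

theorem zarClosure_subset_circuitVarP_plcIndep {L : Finset (Finset (Fin d))}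
    {S : Set (Fin d × Fin 3 → ℂ)} (hS : S ⊆ circuitVarP (plcIndep L)) :
    zarClosure S ⊆ circuitVarP (plcIndep L) := by
  intro x hx
  rw [mem_circuitVarP_plcIndep_iff]
  intro a b c habc hon
  rw [← eval_triplePoly]
  refine hx _ fun y hy => ?_
  rw [eval_triplePoly]
  exact mem_circuitVarP_plcIndep_iff.1 (hS hy) a b c habc hon

theorem varP_subset_circuitVarP_plcIndep {L : Finset (Finset (Fin d))} {P : Set (Fin d) → Prop}
    (hP : ∀ S, P S → plcIndep L S) : varP P ⊆ circuitVarP (plcIndep L) :=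
  zarClosure_subset_circuitVarP_plcIndep (realSpaceP_subset_circuitVarP hP)

theorem mem_realSpaceP_plcIndep [Nontrivial (Fin d)] {L : Finset (Finset (Fin d))}
    {y : Fin d × Fin 3 → ℂ}
    (hext : ∀ a b, a ≠ b → ∃ c, a ≠ c ∧ b ≠ c ∧ ¬ OnLine L a b c)
    (hy : ∀ a b c, Distinct3 a b c → (vecs y a ⬝ᵥ vecs y b ⨯₃ vecs y c = 0 ↔ OnLine L a b c)) :
    y ∈ realSpaceP (plcIndep L) := by
  intro S
  change LinearIndepOn ℂ (vecs y) S ↔ _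
  constructor
  · intro hLI
    refine ⟨not_lt.1 fun h => not_linearIndepOn_of_three_lt_ncard h hLI, fun hcard hl => ?_⟩
    obtain ⟨a, b, c, hab, hac, hbc, rfl⟩ := Set.ncard_eq_three.1 hcard
    exact (linearIndepOn_triple_iff hab hac hbc).1 hLI
      ((hy a b c ⟨hab, hac, hbc⟩).2 (onLine_iff_subset.2 hl))
  · rintro ⟨hle, hline⟩
    rcases hle.lt_or_eq with hlt | hcard
    · obtain ⟨a, b, hab, hSab⟩ := exists_subset_pair (by omega) (Set.toFinite S)
      obtain ⟨c, hac, hbc, hc⟩ := hext a b hab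
      have hsub : ({a, b} : Set (Fin d)) ⊆ {a, b, c} :=
        Set.insert_subset_insert (Set.singleton_subset_iff.2 (Set.mem_insert b {c}))
      have habc : LinearIndepOn ℂ (vecs y) {a, b, c} :=
        (linearIndepOn_triple_iff hab hac hbc).2 fun h => hc ((hy a b c ⟨hab, hac, hbc⟩).1 h)
      exact habc.mono (hSab.trans hsub)
    · obtain ⟨a, b, c, hab, hac, hbc, rfl⟩ := Set.ncard_eq_three.1 hcard
      rw [linearIndepOn_triple_iff hab hac hbc, Ne, hy a b c ⟨hab, hac, hbc⟩, onLine_iff_subset]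
      exact hline hcard

theorem mem_realSpaceP_U26Indep {y : Fin 6 × Fin 3 → ℂ}
    (hpair : ∀ a b, a ≠ b → vecs y a ⨯₃ vecs y b ≠ 0)
    (htriple : ∀ a b c, vecs y a ⬝ᵥ vecs y b ⨯₃ vecs y c = 0) :
    y ∈ realSpaceP U26Indep := by
  intro S
  change LinearIndepOn ℂ (vecs y) S ↔ S.ncard ≤ 2
  constructor
  · intro hLI
    by_contra! h
    obtain ⟨T, hTS, hT⟩ := Set.exists_subset_card_eq (show 3 ≤ S.ncard by omega)
    obtain ⟨a, b, c, hab, hac, hbc, rfl⟩ := Set.ncard_eq_three.1 hT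
    exact (linearIndepOn_triple_iff hab hac hbc).1 (hLI.mono hTS) (htriple a b c)
  · intro hS
    obtain ⟨a, b, hab, hSab⟩ := exists_subset_pair hS (Set.toFinite S)
    exact ((linearIndepOn_pair_iff_cross_ne_zero hab).2 (hpair a b hab)).mono hSab

end Realizations

section PolynomialCurves

variable {K : Type*} [Field K]

variable (K) in
noncomputable def polyFun : Subalgebra K (K → K) := (Polynomial.aeval (fun t : K => t)).range

theorem mem_polyFun_iff {f : K → K} : f ∈ polyFun K ↔ ∃ p : Polynomial K, ∀ t, f t = p.eval t := by
  simp only [polyFun, AlgHom.mem_range, funext_iff, Polynomial.aeval_fn_apply,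
    Polynomial.coe_aeval_eq_eval]
  exact exists_congr fun p => forall_congr' fun _ => eq_comm

theorem id_mem_polyFun : (fun t : K => t) ∈ polyFun K :=
  mem_polyFun_iff.2 ⟨Polynomial.X, fun _ => (Polynomial.eval_X).symm⟩

theorem const_mem_polyFun (c : K) : (fun _ : K => c) ∈ polyFun K :=
  (polyFun K).algebraMap_mem c

theorem eventually_ne_zero_of_mem_polyFun {f : K → K} (hf : f ∈ polyFun K) {a : K}
    (ha : f a ≠ 0) : ∀ᶠ t in Filter.cofinite, f t ≠ 0 := by
  obtain ⟨p, hp⟩ := mem_polyFun_iff.1 hf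
  have hp0 : p ≠ 0 := by
    rintro rfl
    simp [hp] at ha
  simpa [hp, Filter.eventually_cofinite] using Polynomial.finite_setOfPred_isRoot hp0

theorem eventually_ne_zero_of_eq_pow_mul_inv {f g : K → K} {n : ℕ} (hg : g ∈ polyFun K)
    (hg0 : g 0 ≠ 0) (hfg : ∀ t ≠ 0, f t = t ^ n * g t⁻¹) : ∀ᶠ t in Filter.cofinite, f t ≠ 0 := by
  have hinv := inv_injective.tendsto_cofinite.eventually (eventually_ne_zero_of_mem_polyFun hg hg0)
  filter_upwards [hinv, Filter.eventually_cofinite_ne 0] with t ht ht0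
  rw [hfg t ht0]
  exact mul_ne_zero (pow_ne_zero n ht0) ht

def IsPolyCurve {ι : Type*} (γ : K → ι → K) : Prop := ∀ i, (fun t => γ t i) ∈ polyFun K

namespace IsPolyCurve

variable {ι : Type*} {γ δ : K → ι → K}

theorem const (v : ι → K) : IsPolyCurve fun _ : K => v :=
  fun i => const_mem_polyFun (v i)

theorem add (hγ : IsPolyCurve γ) (hδ : IsPolyCurve δ) : IsPolyCurve fun t => γ t + δ t :=
  fun i => add_mem (hγ i) (hδ i)

theorem smul {f : K → K} (hf : f ∈ polyFun K) (hγ : IsPolyCurve γ) :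
    IsPolyCurve fun t => f t • γ t :=
  fun i => mul_mem hf (hγ i)

theorem eval_mem (hγ : IsPolyCurve γ) (f : MvPolynomial ι K) :
    (fun t => eval (γ t) f) ∈ polyFun K := by
  induction f using MvPolynomial.induction_on with
  | C a => simpa using const_mem_polyFun a
  | add p q hp hq =>
    simp only [map_add]
    exact add_mem hp hq
  | mul_X p i hp =>
    simp only [map_mul, eval_X]
    exact mul_mem hp (hγ i)

theorem cross {γ δ : K → Fin 3 → K} (hγ : IsPolyCurve γ) (hδ : IsPolyCurve δ) :
    IsPolyCurve fun t => γ t ⨯₃ δ t := by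
  intro i
  simp only [cross_apply]
  fin_cases i
  · exact sub_mem (mul_mem (hγ 1) (hδ 2)) (mul_mem (hγ 2) (hδ 1))
  · exact sub_mem (mul_mem (hγ 2) (hδ 0)) (mul_mem (hγ 0) (hδ 2))
  · exact sub_mem (mul_mem (hγ 0) (hδ 1)) (mul_mem (hγ 1) (hδ 0))

theorem dotProduct_mem {γ δ : K → Fin 3 → K} (hγ : IsPolyCurve γ) (hδ : IsPolyCurve δ) :
    (fun t => γ t ⬝ᵥ δ t) ∈ polyFun K := by
  simp only [dotProduct, Fin.sum_univ_three]
  exact add_mem (add_mem (mul_mem (hγ 0) (hδ 0)) (mul_mem (hγ 1) (hδ 1))) (mul_mem (hγ 2) (hδ 2))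

end IsPolyCurve

theorem eventually_ne_zero_of_eq_pow_smul_inv {ι : Type*} {F G : K → ι → K} {n : ℕ}
    (hG : IsPolyCurve G) (hG0 : G 0 ≠ 0) (hFG : ∀ t ≠ 0, F t = t ^ n • G t⁻¹) :
    ∀ᶠ t in Filter.cofinite, F t ≠ 0 := by
  obtain ⟨i, hi⟩ := Function.ne_iff.1 hG0
  filter_upwards [eventually_ne_zero_of_eq_pow_mul_inv (hG i) hi
    fun t ht => congrFun (hFG t ht) i] with t ht hF
  exact ht (congrFun hF i)

theorem add_smul_eq_smul_inv {V : Type*} [AddCommGroup V] [Module K V] (u w : V) {t : K}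
    (ht : t ≠ 0) : u + t • w = t • (t⁻¹ • u + w) := by
  rw [smul_add, smul_inv_smul₀ ht]

theorem add_smul_add_sq_smul_eq_smul_inv {V : Type*} [AddCommGroup V] [Module K V] (u v w : V)
    {t : K} (ht : t ≠ 0) : u + t • v + t ^ 2 • w = t ^ 2 • (w + t⁻¹ • v + t⁻¹ ^ 2 • u) := by
  rw [smul_add, smul_add, smul_smul, smul_smul, ← mul_pow, mul_inv_cancel₀ ht, one_pow, one_smul,
    pow_two, mul_assoc, mul_inv_cancel₀ ht, mul_one]
  abel

theorem eventually_cross_ne_zero {u u' w w' : Fin 3 → K} (hw : w ⨯₃ w' ≠ 0) :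
    ∀ᶠ t : K in Filter.cofinite, (u + t • w) ⨯₃ (u' + t • w') ≠ 0 := by
  have hrev : ∀ u w : Fin 3 → K, IsPolyCurve fun s : K => w + s • u := fun u w =>
    (IsPolyCurve.const w).add (IsPolyCurve.smul id_mem_polyFun (IsPolyCurve.const u))
  refine eventually_ne_zero_of_eq_pow_smul_inv (n := 2) ((hrev u w).cross (hrev u' w')) (by simpa)
    fun t ht => ?_
  rw [add_smul_eq_smul_inv _ _ ht, add_smul_eq_smul_inv _ _ ht]
  simp only [map_smul, LinearMap.smul_apply, smul_smul, sq, add_comm]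

theorem IsPolyCurve.mem_zarClosure {ι : Type} {γ : ℂ → ι → ℂ} (hγ : IsPolyCurve γ)
    {S : Set (ι → ℂ)} (hS : ∀ᶠ t in Filter.cofinite, γ t ∈ S) (t₀ : ℂ) :
    γ t₀ ∈ zarClosure S := by
  intro f hf
  by_contra h
  obtain ⟨t, ht, htS⟩ := ((eventually_ne_zero_of_mem_polyFun (hγ.eval_mem f) h).and hS).exists
  exact ht (hf _ htS)

end PolynomialCurves

section RankTwo

variable {K : Type*} [Field K]

theorem exists_orthogonal_of_triple_product_eq_zero {ι : Type*} {v : ι → Fin 3 → K}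
    (h : ∀ a b c, v a ⬝ᵥ v b ⨯₃ v c = 0) : ∃ n ≠ 0, ∀ i, v i ⬝ᵥ n = 0 := by
  by_cases hcross : ∃ a b, v a ⨯₃ v b ≠ 0
  · obtain ⟨a, b, hab⟩ := hcross
    exact ⟨v a ⨯₃ v b, hab, fun i => (triple_product_permutation _ _ _).trans (h a b i)⟩
  push Not at hcross
  by_cases hzero : ∃ a, v a ≠ 0
  · obtain ⟨a, ha⟩ := hzero
    obtain ⟨w, hw⟩ := exists_cross_ne_zero ha
    refine ⟨v a ⨯₃ w, hw, fun i => ?_⟩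
    obtain ⟨c, hc⟩ := exists_smul_eq_of_cross_eq_zero ha (hcross a i)
    rw [← hc, smul_dotProduct, dot_self_cross, smul_zero]
  · push Not at hzero
    exact ⟨Pi.single 0 1, by simp, fun i => by simp [hzero i]⟩

theorem exists_triple_product_ne_zero {n : Fin 3 → K} (hn : n ≠ 0) :
    ∃ a b, n ⬝ᵥ a ⨯₃ b ≠ 0 := by
  obtain ⟨a, ha⟩ := exists_cross_ne_zero hn
  obtain ⟨b, hb⟩ := exists_dotProduct_ne_zero ha
  refine ⟨a, b, ?_⟩
  rwa [dotProduct_comm, triple_product_permutation] at hb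

theorem cross_cross_add_smul_ne_zero {n a b : Fin 3 → K} (h : n ⬝ᵥ a ⨯₃ b ≠ 0) {c c' : K}
    (hcc' : c ≠ c') : (n ⨯₃ (a + c • b)) ⨯₃ (n ⨯₃ (a + c' • b)) ≠ 0 := by
  have hn : n ≠ 0 := by
    rintro rfl
    simp at h
  rw [cross_cross_cross_self]
  refine smul_ne_zero ?_ hn
  have : n ⬝ᵥ (a + c • b) ⨯₃ (a + c' • b) = (c' - c) * (n ⬝ᵥ a ⨯₃ b) := by
    simp only [map_add, map_smul, LinearMap.add_apply, LinearMap.smul_apply, cross_self,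
      dotProduct_add, dotProduct_smul, smul_eq_mul, dotProduct_zero, ← cross_anticomm b a,
      dotProduct_neg]
    ring
  rw [this]
  exact mul_ne_zero (sub_ne_zero.2 hcc'.symm) h

theorem mem_varP_U26Indep {x : Fin 6 × Fin 3 → ℂ}
    (hx : ∀ a b c, vecs x a ⬝ᵥ vecs x b ⨯₃ vecs x c = 0) : x ∈ varP U26Indep := by
  obtain ⟨n, hn, hxn⟩ := exists_orthogonal_of_triple_product_eq_zero hx
  obtain ⟨a, b, hab⟩ := exists_triple_product_ne_zero hn
  -- pairwise independent directions in the plane `n⊥`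
  set z : Fin 6 → Fin 3 → ℂ := fun p => n ⨯₃ (a + (p : ℂ) • b)
  set γ : ℂ → Fin 6 × Fin 3 → ℂ := fun t q => (vecs x q.1 + t • z q.1) q.2
  have hvecs : ∀ t p, vecs (γ t) p = vecs x p + t • z p := fun _ _ => rfl
  have hγ : IsPolyCurve γ := fun q =>
    ((IsPolyCurve.const _).add (IsPolyCurve.smul id_mem_polyFun (IsPolyCurve.const _))) q.2
  have hγ0 : γ 0 = x := by
    ext q
    simp [γ, vecs]
  have hpair : ∀ p q, ∀ᶠ t in Filter.cofinite, p ≠ q → vecs (γ t) p ⨯₃ vecs (γ t) q ≠ 0 := by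
    intro p q
    simp only [hvecs, Filter.eventually_imp_distrib_left]
    exact fun hpq => eventually_cross_ne_zero
      (cross_cross_add_smul_ne_zero hab (Nat.cast_injective.ne (Fin.val_injective.ne hpq)))
  have horth : ∀ t p, vecs (γ t) p ⬝ᵥ n = 0 := fun t p => by
    rw [hvecs, add_dotProduct, smul_dotProduct, hxn, dotProduct_comm, dot_self_cross, smul_zero,
      add_zero]
  rw [← hγ0]
  refine hγ.mem_zarClosure ?_ 0
  filter_upwards [Filter.eventually_all.2 fun p => Filter.eventually_all.2 (hpair p)] with t ht
  exact mem_realSpaceP_U26Indep ht fun a b c =>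
    (triple_product_eq_zero_iff _ _ _).2 ⟨n, hn, horth t a, horth t b, horth t c⟩

end RankTwo

section MovingLines

variable {K : Type*} [Field K]

theorem isPolyCurve_quadratic (u v w : Fin 3 → K) :
    IsPolyCurve fun t : K => u + t • v + t ^ 2 • w :=
  ((IsPolyCurve.const u).add (IsPolyCurve.smul id_mem_polyFun (IsPolyCurve.const v))).add
    (IsPolyCurve.smul (pow_mem id_mem_polyFun 2) (IsPolyCurve.const w))

theorem exists_pointCurve {a b ma mb ga gb v : Fin 3 → K} (ha : v ⬝ᵥ a = 0) (hb : v ⬝ᵥ b = 0)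
    (hpar : a ⨯₃ b = 0 → a ⨯₃ mb + ma ⨯₃ b = v) :
    ∃ G : K → Fin 3 → K, IsPolyCurve G ∧ G 0 = v ∧ ∀ᶠ t in Filter.cofinite,
      ∃ c : K, c ≠ 0 ∧ G t = c • (a + t • ma + t ^ 2 • ga) ⨯₃ (b + t • mb + t ^ 2 • gb) := by
  have hN := (isPolyCurve_quadratic a ma ga).cross (isPolyCurve_quadratic b mb gb)
  by_cases hab : a ⨯₃ b = 0
  · -- the cross product vanishes at `t = 0`; `G` is the cross product divided by `t`
    refine ⟨fun t => v + t • (a ⨯₃ gb + ma ⨯₃ mb + ga ⨯₃ b) + t ^ 2 • (ma ⨯₃ gb + ga ⨯₃ mb)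
      + t ^ 3 • ga ⨯₃ gb, ?_, by simp, ?_⟩
    · exact (isPolyCurve_quadratic _ _ _).add (IsPolyCurve.smul (pow_mem id_mem_polyFun 3)
        (IsPolyCurve.const _))
    · filter_upwards [Filter.eventually_cofinite_ne 0] with t ht
      refine ⟨t⁻¹, inv_ne_zero ht, ?_⟩
      rw [eq_inv_smul_iff₀ ht, ← hpar hab]
      simp only [map_add, map_smul, LinearMap.add_apply, LinearMap.smul_apply, hab]
      module
  · obtain ⟨c, rfl⟩ := exists_eq_smul_cross hab ha hb
    refine ⟨fun t => (c + t) • (a + t • ma + t ^ 2 • ga) ⨯₃ (b + t • mb + t ^ 2 • gb),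
      IsPolyCurve.smul (add_mem (const_mem_polyFun c) id_mem_polyFun) hN, by simp, ?_⟩
    filter_upwards [Filter.eventually_cofinite_ne (-c)] with t ht
    exact ⟨c + t, fun h => ht (by linear_combination h), rfl⟩

theorem eventually_triple_product_ne_zero {ι : Type*} {n m g : ι → Fin 3 → K} {i j k : ι}
    (hg : g i ⬝ᵥ g j ⨯₃ g k ≠ 0) : ∀ᶠ t : K in Filter.cofinite,
      (n i + t • m i + t ^ 2 • g i) ⬝ᵥ (n j + t • m j + t ^ 2 • g j) ⨯₃
        (n k + t • m k + t ^ 2 • g k) ≠ 0 := by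
  have hrev : ∀ l, IsPolyCurve fun s : K => g l + s • m l + s ^ 2 • n l := fun l =>
    isPolyCurve_quadratic _ _ _
  refine eventually_ne_zero_of_eq_pow_mul_inv (n := 6)
    (IsPolyCurve.dotProduct_mem (hrev i) ((hrev j).cross (hrev k))) ?_ fun t ht => ?_
  · simpa using hg
  · simp only [add_smul_add_sq_smul_eq_smul_inv _ _ _ ht, triple_product_smul]
    ring

def momentCurve (s : K) : Fin 3 → K := ![1, s, s ^ 2]

theorem triple_product_momentCurve (a b c : K) :
    momentCurve a ⬝ᵥ momentCurve b ⨯₃ momentCurve c = (b - a) * (c - a) * (c - b) := by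
  simp [momentCurve, cross_apply, dotProduct, Fin.sum_univ_three]
  ring

end MovingLines

section Quadrilateral

def qsLine : Fin 4 → Finset (Fin 6) := ![{1, 2, 3}, {1, 5, 0}, {2, 4, 0}, {3, 4, 5}]

def lineLo : Fin 6 → Fin 4 := ![1, 0, 0, 0, 2, 1]

def lineHi : Fin 6 → Fin 4 := ![2, 1, 2, 3, 3, 3]

theorem mem_qsLine_iff : ∀ ℓ p, p ∈ qsLine ℓ ↔ ℓ = lineLo p ∨ ℓ = lineHi p := by decide

theorem mem_qsLine_lineLo (p : Fin 6) : p ∈ qsLine (lineLo p) :=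
  (mem_qsLine_iff _ _).2 (Or.inl rfl)

theorem mem_qsLine_lineHi (p : Fin 6) : p ∈ qsLine (lineHi p) :=
  (mem_qsLine_iff _ _).2 (Or.inr rfl)

theorem lineLo_lt_lineHi : ∀ p, lineLo p < lineHi p := by decide

theorem eq_of_lineLo_eq_of_lineHi_eq :
    ∀ p q, lineLo p = lineLo q → lineHi p = lineHi q → p = q := by decide

theorem mem_qsLine_of_distinct3 :
    ∀ i j k, Distinct3 i j k → ∀ p, p ∈ qsLine i ∨ p ∈ qsLine j ∨ p ∈ qsLine k := by decide

theorem qsLine_eq_triple :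
    ∀ ℓ, ∃ p q r, Distinct3 p q r ∧ OnLine QS p q r ∧ qsLine ℓ = {p, q, r} := by decide

theorem exists_not_onLine_QS :
    ∀ a b : Fin 6, a ≠ b → ∃ c, a ≠ c ∧ b ≠ c ∧ ¬ OnLine QS a b c := by decide

-- `P` and `Q` say that the two summands of `triple_product_cross` for the points `a b c`,
-- written as intersections of lines in general position, are nonzero.
theorem onLine_QS_iff : ∀ a b c : Fin 6, Distinct3 a b c →
    let P := Distinct3 (lineLo a) (lineHi a) (lineHi b) ∧ Distinct3 (lineLo b) (lineLo c) (lineHi c)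
    let Q := Distinct3 (lineLo a) (lineHi a) (lineLo b) ∧ Distinct3 (lineHi b) (lineLo c) (lineHi c)
    (OnLine QS a b c ↔ ¬ P ∧ ¬ Q) ∧ ¬ (P ∧ Q) := by
  decide

theorem triple_product_ne_zero_iff_distinct3 {K ι : Type*} [Field K] {N : ι → Fin 3 → K}
    (hN : ∀ i j k, Distinct3 i j k → N i ⬝ᵥ N j ⨯₃ N k ≠ 0) {i j k : ι} :
    N i ⬝ᵥ N j ⨯₃ N k ≠ 0 ↔ Distinct3 i j k := by
  refine ⟨fun h => ⟨?_, ?_, ?_⟩, hN i j k⟩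
  · rintro rfl
    exact h (dot_self_cross _ _)
  · rintro rfl
    exact h (dot_cross_self _ _)
  · rintro rfl
    exact h (by rw [cross_self, dotProduct_zero])

theorem mem_realSpaceP_QS {N : Fin 4 → Fin 3 → ℂ}
    (hN : ∀ i j k, Distinct3 i j k → N i ⬝ᵥ N j ⨯₃ N k ≠ 0) {y : Fin 6 × Fin 3 → ℂ}
    (hy : ∀ p, ∃ c : ℂ, c ≠ 0 ∧ vecs y p = c • N (lineLo p) ⨯₃ N (lineHi p)) :
    y ∈ realSpaceP (plcIndep QS) := by
  choose s hs hys using hy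
  refine mem_realSpaceP_plcIndep exists_not_onLine_QS fun a b c habc => ?_
  obtain ⟨hcomb, hPQ⟩ := onLine_QS_iff a b c habc
  rw [hys, hys, hys, triple_product_smul, mul_eq_zero,
    or_iff_right (mul_ne_zero (mul_ne_zero (hs a) (hs b)) (hs c)), triple_product_cross,
    sub_eq_zero, hcomb]
  have hprod : ∀ {i j k i' j' k'}, N i ⬝ᵥ N j ⨯₃ N k * N i' ⬝ᵥ N j' ⨯₃ N k' ≠ 0 ↔
      Distinct3 i j k ∧ Distinct3 i' j' k' := by
    intros
    rw [mul_ne_zero_iff, triple_product_ne_zero_iff_distinct3 hN,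
      triple_product_ne_zero_iff_distinct3 hN]
  rw [← hprod, ← hprod] at hPQ ⊢
  simp only [not_not]
  exact eq_iff_eq_zero_and_eq_zero hPQ

end Quadrilateral

section RankThree

variable {K : Type*} [Field K] {v : Fin 6 → Fin 3 → K}

theorem exists_qsLine_normals
    (hv : ∀ a b c, Distinct3 a b c → OnLine QS a b c → v a ⬝ᵥ v b ⨯₃ v c = 0) :
    ∃ n : Fin 4 → Fin 3 → K, (∀ ℓ, n ℓ ≠ 0) ∧ ∀ ℓ, ∀ p ∈ qsLine ℓ, v p ⬝ᵥ n ℓ = 0 := by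
  have : ∀ ℓ, ∃ n ≠ 0, ∀ p ∈ qsLine ℓ, v p ⬝ᵥ n = 0 := by
    intro ℓ
    obtain ⟨p, q, r, hpqr, hon, hℓ⟩ := qsLine_eq_triple ℓ
    obtain ⟨n, hn, hp, hq, hr⟩ := (triple_product_eq_zero_iff _ _ _).1 (hv p q r hpqr hon)
    refine ⟨n, hn, fun s hs => ?_⟩
    rw [hℓ, Finset.mem_insert, Finset.mem_insert, Finset.mem_singleton] at hs
    rcases hs with rfl | rfl | rfl <;> assumption
  choose n hn0 hn using this
  exact ⟨n, hn0, hn⟩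

variable {n : Fin 4 → Fin 3 → K}

theorem not_three_parallel_normals (hn0 : ∀ ℓ, n ℓ ≠ 0)
    (hn : ∀ ℓ, ∀ p ∈ qsLine ℓ, v p ⬝ᵥ n ℓ = 0) (hrank : ∃ a b c, v a ⬝ᵥ v b ⨯₃ v c ≠ 0)
    {i j k : Fin 4} (hijk : Distinct3 i j k) :
    ¬ (n i ⨯₃ n j = 0 ∧ n i ⨯₃ n k = 0) := by
  rintro ⟨hij, hik⟩
  obtain ⟨a, b, c, habc⟩ := hrank
  have horth : ∀ p, v p ⬝ᵥ n i = 0 := fun p => by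
    rcases mem_qsLine_of_distinct3 i j k hijk p with hp | hp | hp
    · exact hn i p hp
    · exact dotProduct_eq_zero_of_cross_eq_zero (hn0 j) hij (hn j p hp)
    · exact dotProduct_eq_zero_of_cross_eq_zero (hn0 k) hik (hn k p hp)
  exact habc ((triple_product_eq_zero_iff _ _ _).2 ⟨n i, hn0 i, horth a, horth b, horth c⟩)

theorem exists_parallel_corrections (hn0 : ∀ ℓ, n ℓ ≠ 0)
    (hn : ∀ ℓ, ∀ p ∈ qsLine ℓ, v p ⬝ᵥ n ℓ = 0) (hrank : ∃ a b c, v a ⬝ᵥ v b ⨯₃ v c ≠ 0) :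
    ∃ m : Fin 4 → Fin 3 → K, ∀ p, n (lineLo p) ⨯₃ n (lineHi p) = 0 →
      n (lineLo p) ⨯₃ m (lineHi p) + m (lineLo p) ⨯₃ n (lineHi p) = v p := by
  classical
  have hu : ∀ p, ∃ u, n (lineLo p) ⨯₃ u = v p := fun p =>
    exists_cross_eq (hn0 _) (hn _ p (mem_qsLine_lineLo p))
  choose u hu using hu
  -- by `not_three_parallel_normals`, a line is parallel to at most one other line
  refine ⟨fun ℓ => if h : ∃ p, lineHi p = ℓ ∧ n (lineLo p) ⨯₃ n ℓ = 0 then u h.choose else 0,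
    fun p hp => ?_⟩
  have hhi : ∃ q, lineHi q = lineHi p ∧ n (lineLo q) ⨯₃ n (lineHi p) = 0 := ⟨p, rfl, hp⟩
  have hlo : ¬ ∃ q, lineHi q = lineLo p ∧ n (lineLo q) ⨯₃ n (lineLo p) = 0 := by
    rintro ⟨q, hq, hqp⟩
    have h₁ := lineLo_lt_lineHi q
    have h₂ := lineLo_lt_lineHi p
    refine not_three_parallel_normals hn0 hn hrank (i := lineLo p) (j := lineHi p)
      (k := lineLo q) ⟨by omega, by omega, by omega⟩ ⟨hp, cross_eq_zero_comm.1 hqp⟩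
  obtain ⟨hq, hqp⟩ := hhi.choose_spec
  have hqeq : hhi.choose = p := by
    by_contra hne
    have hlo_ne : lineLo hhi.choose ≠ lineLo p := fun h =>
      hne (eq_of_lineLo_eq_of_lineHi_eq _ _ h hq)
    have h₁ := lineLo_lt_lineHi hhi.choose
    have h₂ := lineLo_lt_lineHi p
    refine not_three_parallel_normals hn0 hn hrank (i := lineHi p) (j := lineLo p)
      (k := lineLo hhi.choose) ⟨by omega, by omega, hlo_ne.symm⟩
      ⟨cross_eq_zero_comm.1 hp, cross_eq_zero_comm.1 hqp⟩
  simp only [dif_pos hhi, dif_neg hlo, hqeq, hu, map_zero, LinearMap.zero_apply, add_zero]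

end RankThree

noncomputable def deformedLines (n m : Fin 4 → Fin 3 → ℂ) (t : ℂ) (ℓ : Fin 4) : Fin 3 → ℂ :=
  n ℓ + t • m ℓ + t ^ 2 • momentCurve (ℓ : ℂ)

theorem mem_varP_QS {x : Fin 6 × Fin 3 → ℂ}
    (hline : ∀ a b c, Distinct3 a b c → OnLine QS a b c → vecs x a ⬝ᵥ vecs x b ⨯₃ vecs x c = 0)
    (hrank : ∃ a b c, vecs x a ⬝ᵥ vecs x b ⨯₃ vecs x c ≠ 0) : x ∈ varP (plcIndep QS) := by
  obtain ⟨n, hn0, hn⟩ := exists_qsLine_normals hline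
  obtain ⟨m, hm⟩ := exists_parallel_corrections hn0 hn hrank
  have hG : ∀ p, ∃ G : ℂ → Fin 3 → ℂ, IsPolyCurve G ∧ G 0 = vecs x p ∧
      ∀ᶠ t in Filter.cofinite, ∃ c : ℂ, c ≠ 0 ∧
        G t = c • deformedLines n m t (lineLo p) ⨯₃ deformedLines n m t (lineHi p) :=
    fun p => exists_pointCurve (hn _ p (mem_qsLine_lineLo p)) (hn _ p (mem_qsLine_lineHi p)) (hm p)
  choose G hGpoly hG0 hGN using hG
  have hgen : ∀ᶠ t in Filter.cofinite, ∀ i j k, Distinct3 i j k →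
      deformedLines n m t i ⬝ᵥ deformedLines n m t j ⨯₃ deformedLines n m t k ≠ 0 := by
    simp only [Filter.eventually_all]
    rintro i j k ⟨hij, hik, hjk⟩
    refine eventually_triple_product_ne_zero (n := n) (m := m)
      (g := fun ℓ : Fin 4 => momentCurve (ℓ : ℂ)) ?_
    rw [triple_product_momentCurve]
    simp [sub_eq_zero, Fin.val_injective.ne, Ne.symm hij, Ne.symm hik, Ne.symm hjk]
  have hγ : IsPolyCurve fun t (q : Fin 6 × Fin 3) => G q.1 t q.2 := fun q => hGpoly q.1 q.2
  have hreal : ∀ᶠ t in Filter.cofinite,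
      (fun q : Fin 6 × Fin 3 => G q.1 t q.2) ∈ realSpaceP (plcIndep QS) := by
    filter_upwards [hgen, Filter.eventually_all.2 hGN] with t ht htG
    exact mem_realSpaceP_QS ht htG
  have hγ0 : (fun q : Fin 6 × Fin 3 => G q.1 0 q.2) = x := by
    ext ⟨p, k⟩
    exact congrFun (hG0 p) k
  rw [← hγ0]
  exact hγ.mem_zarClosure hreal 0

theorem plcIndep_of_U26Indep {S : Set (Fin 6)} (hS : U26Indep S) : plcIndep QS S :=
  ⟨hS.trans (by norm_num), fun h => absurd h (by unfold U26Indep at hS; omega)⟩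

theorem circuitVarP_QS_eq_union :
    circuitVarP (plcIndep QS) = varP (plcIndep QS) ∪ varP U26Indep := by
  refine subset_antisymm (fun x hx => ?_) (Set.union_subset
    (varP_subset_circuitVarP_plcIndep fun _ h => h)
    (varP_subset_circuitVarP_plcIndep fun _ => plcIndep_of_U26Indep))
  have hline := mem_circuitVarP_plcIndep_iff.1 hx
  by_cases hrank : ∃ a b c, vecs x a ⬝ᵥ vecs x b ⨯₃ vecs x c ≠ 0
  · exact Or.inl (mem_varP_QS hline hrank)
  · push Not at hrank
    exact Or.inr (mem_varP_U26Indep hrank)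

theorem degreeOf_QS : ∀ p, degreeOf QS p = 2 := by decide

theorem plcStep_iterate_two_QS :
    ∀ A : Finset (Fin 6), A ⊂ Finset.univ → (plcStep^[2] (A, restrictLines QS A)).1 = ∅ := by
  decide

end QuadrilateralSet

theorem stmt11 :
    -- every point of QS has degree 2,
    (∀ p : Fin 6, degreeOf QS p = 2) ∧
    -- every proper submatroid of QS is nilpotent,
    (∀ A : Finset (Fin 6), A ⊂ Finset.univ → Nilpotent (A, restrictLines QS A)) ∧
    -- consequently the circuit variety decomposes as V_QS ∪ V_{U_{2,6}}:
    circuitVarP (plcIndep QS) = varP (plcIndep QS) ∪ varP U26Indep :=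
  ⟨QuadrilateralSet.degreeOf_QS, fun A hA => ⟨2, QuadrilateralSet.plcStep_iterate_two_QS A hA⟩,
    QuadrilateralSet.circuitVarP_QS_eq_union⟩
end

section
/- Let M be a point-line configuration on [d] and let x₁,…,x_n be 3-element subsets of [d], none of which is dependent in M, such that x_{i+1} is a circuit of M^{x_i} for each i (indices mod n), and no 3-set y outside {x₁,…,x_n} is a circuit of M^{x_n} other than the circuits of M. Then M^{x₁} = ⋯ = M^{x_n}, the 3-circuits of M^{x_n} are exactly C₃(M) ∪ {x₁,…,x_n}, and M^{x_n} is a minimal matroid strictly above M in the dependency order among simple rank-3 matroids (loopless, no parallel pairs). -/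
/-!
Adding the circuit `x_{i+1}` of `M^{x_i}` to `M` yields a configuration below `M^{x_i}`, so
`M^{x_{i+1}} ≤ M^{x_i}`; going once around the cycle forces all the `M^{x_i}` to coincide.
Any configuration `M'` with `M < M' ≤ M^{x_n}` has a new circuit, which by hypothesis is some
`x_i`, and then `M' ≥ M^{x_i} = M^{x_n}`.
-/

open Finset

variable {d : ℕ}

/-- `N` covers `Δ`: every member of `Δ` is contained in a line of `N`. -/
def Covers (Δ N : Finset (Finset (Fin d))) : Prop :=
  ∀ e ∈ Δ, ∃ l ∈ N, e ⊆ l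

/-- `N` is the minimal point-line configuration covering `Δ` (this is `M^x` when
`Δ = ℒ ∪ {x}`). -/
def IsMinCover (Δ N : Finset (Finset (Fin d))) : Prop :=
  IsPLC N ∧ Covers Δ N ∧ ∀ N', IsPLC N' → Covers Δ N' → Covers N N'

/-- Dependency order between point-line configurations: every dependent 3-set of
the first is dependent in the second. -/
def plcDepLE (L₁ L₂ : Finset (Finset (Fin d))) : Prop :=
  ∀ S : Finset (Fin d), S.card = 3 → (∃ l ∈ L₁, S ⊆ l) → ∃ l ∈ L₂, S ⊆ l

def plcDepLT (L₁ L₂ : Finset (Finset (Fin d))) : Prop :=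
  plcDepLE L₁ L₂ ∧ ¬ plcDepLE L₂ L₁

theorem Fin.rel_of_cyclic {α : Type*} {r : α → α → Prop} [Std.Refl r] [IsTrans α r] {n : ℕ}
    {f : Fin (n + 1) → α} (h : ∀ i, r (f (i + 1)) (f i)) (i j : Fin (n + 1)) :
    r (f j) (f i) := by
  open Fin.NatCast in
  have reach : ∀ k : ℕ, Relation.ReflTransGen r (f (i + k)) (f i) := by
    intro k
    induction k with
    | zero => simpa using Relation.ReflTransGen.refl
    | succ k ih => simpa [← add_assoc] using Relation.ReflTransGen.head (h (i + k)) ih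
  open Fin.NatCast in
  have hj : i + ((j - i).val : Fin (n + 1)) = j := by
    rw [Fin.cast_val_eq_self, add_sub_cancel]
  rw [← Relation.reflTransGen_eq_self (r := r), ← hj]
  exact reach _

namespace Covers

variable {A B C : Finset (Finset (Fin d))}

protected theorem refl (A : Finset (Finset (Fin d))) : Covers A A :=
  fun e he => ⟨e, he, subset_rfl⟩

protected theorem trans (hAB : Covers A B) (hBC : Covers B C) : Covers A C := by
  intro e he
  obtain ⟨l, hl, hel⟩ := hAB e he
  obtain ⟨m, hm, hlm⟩ := hBC l hl
  exact ⟨m, hm, hel.trans hlm⟩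

instance : Std.Refl (Covers (d := d)) := ⟨Covers.refl⟩

instance : IsTrans (Finset (Finset (Fin d))) Covers := ⟨fun _ _ _ => Covers.trans⟩

theorem plcDepLE (h : Covers A B) : plcDepLE A B := by
  rintro S - ⟨l, hl, hSl⟩
  obtain ⟨m, hm, hlm⟩ := h l hl
  exact ⟨m, hm, hSl.trans hlm⟩

theorem insert_iff {x : Finset (Fin d)} :
    Covers (insert x A) B ↔ (∃ l ∈ B, x ⊆ l) ∧ Covers A B :=
  forall_mem_insert _ _ _

end Covers

namespace IsPLC

variable {A B : Finset (Finset (Fin d))}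

theorem eq_of_mem_of_mem (hA : IsPLC A) {l l' : Finset (Fin d)} (hl : l ∈ A) (hl' : l' ∈ A)
    {a b : Fin d} (hab : a ≠ b) (ha : a ∈ l ∩ l') (hb : b ∈ l ∩ l') : l = l' := by
  by_contra hne
  have hsub : ({a, b} : Finset (Fin d)) ⊆ l ∩ l' := insert_subset ha (singleton_subset_iff.2 hb)
  have := (card_le_card hsub).trans (hA.2 l hl l' hl' hne)
  rw [card_pair hab] at this
  omega

theorem eq_of_subset (hA : IsPLC A) {l l' : Finset (Fin d)} (hl : l ∈ A) (hl' : l' ∈ A)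
    (h : l ⊆ l') : l = l' := by
  by_contra hne
  have := hA.2 l hl l' hl' hne
  rw [inter_eq_left.2 h] at this
  have := hA.1 l hl
  omega

theorem subset_of_covers (hA : IsPLC A) (hAB : Covers A B) (hBA : Covers B A) : A ⊆ B := by
  intro l hl
  obtain ⟨l', hl', hll'⟩ := hAB l hl
  obtain ⟨l'', hl'', hl'l''⟩ := hBA l' hl'
  obtain rfl := hA.eq_of_subset hl hl'' (hll'.trans hl'l'')
  rwa [Subset.antisymm hll' hl'l'']

theorem eq_of_covers (hA : IsPLC A) (hB : IsPLC B) (hAB : Covers A B) (hBA : Covers B A) :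
    A = B :=
  Subset.antisymm (hA.subset_of_covers hAB hBA) (hB.subset_of_covers hBA hAB)

/-- Each line of `A` has three points on a line `m` of `B`; every further point `p` of it
forms a dependent triple with two of those points, whose line in `B` must again be `m`. -/
theorem covers_of_plcDepLE (hA : ∀ l ∈ A, 3 ≤ l.card) (hB : IsPLC B) (h : plcDepLE A B) :
    Covers A B := by
  intro l hl
  obtain ⟨t, htl, ht⟩ := exists_subset_card_eq (hA l hl)
  obtain ⟨m, hm, htm⟩ := h t ht ⟨l, hl, htl⟩
  refine ⟨m, hm, fun p hp => ?_⟩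
  have : 1 < (t.erase p).card := by
    have := pred_card_le_card_erase (s := t) (a := p)
    omega
  obtain ⟨a, ha, b, hb, hab⟩ := one_lt_card.1 this
  obtain ⟨hap, hat⟩ := mem_erase.1 ha
  obtain ⟨hbp, hbt⟩ := mem_erase.1 hb
  have hcard : ({a, b, p} : Finset (Fin d)).card = 3 :=
    card_eq_three.2 ⟨a, b, p, hab, hap, hbp, rfl⟩
  have hsub : ({a, b, p} : Finset (Fin d)) ⊆ l := by
    simp only [insert_subset_iff, singleton_subset_iff]
    exact ⟨htl hat, htl hbt, hp⟩
  obtain ⟨m', hm', habp⟩ := h _ hcard ⟨l, hl, hsub⟩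
  have hmm' : m = m' := hB.eq_of_mem_of_mem hm hm' hab
    (mem_inter.2 ⟨htm hat, habp (by simp)⟩) (mem_inter.2 ⟨htm hbt, habp (by simp)⟩)
  exact hmm' ▸ habp (by simp)

end IsPLC

namespace IsMinCover

variable {L N N' : Finset (Finset (Fin d))} {x : Finset (Fin d)}

theorem dep (hN : IsMinCover (insert x L) N) : ∃ l ∈ N, x ⊆ l :=
  (Covers.insert_iff.1 hN.2.1).1

theorem covers_base (hN : IsMinCover (insert x L) N) : Covers L N :=
  (Covers.insert_iff.1 hN.2.1).2

theorem covers_of_dep (hN : IsMinCover (insert x L) N) (hN' : IsPLC N') (hLN' : Covers L N')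
    (hx : ∃ l ∈ N', x ⊆ l) : Covers N N' :=
  hN.2.2 N' hN' (Covers.insert_iff.2 ⟨hx, hLN'⟩)

theorem plcDepLE_of_dep (hN : IsMinCover (insert x L) N) (hL : ∀ l ∈ L, 3 ≤ l.card)
    (hN' : IsPLC N') (hLN' : plcDepLE L N') (hx : ∃ l ∈ N', x ⊆ l) : plcDepLE N N' :=
  (hN.covers_of_dep hN' (hN'.covers_of_plcDepLE hL hLN') hx).plcDepLE

end IsMinCover

theorem stmt15 (L : Finset (Finset (Fin d))) (hL : IsPLC L) (n : ℕ)
    (x : Fin (n + 1) → Finset (Fin d)) (hcard : ∀ i, (x i).card = 3)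
    (hnotdep : ∀ i, ∀ l ∈ L, ¬ x i ⊆ l)
    (N : Fin (n + 1) → Finset (Finset (Fin d)))
    (hN : ∀ i, IsMinCover (insert (x i) L) (N i))
    -- `x_{i+1}` is a circuit of `M^{x_i}` for each `i` (indices mod `n+1`)
    (hcyc : ∀ i : Fin (n + 1), ∃ l ∈ N i, x (i + 1) ⊆ l)
    -- no 3-set outside `{x₁, …, x_n}` is a circuit of `M^{x_n}` beyond those of `M`
    (hno : ∀ y : Finset (Fin d), y.card = 3 → (∀ i, y ≠ x i) →
      (∃ l ∈ N (Fin.last n), y ⊆ l) → ∃ l ∈ L, y ⊆ l) :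
    -- then `M^{x₁} = ⋯ = M^{x_n}`,
    (∀ i j, N i = N j) ∧
    -- the 3-circuits of `M^{x_n}` are exactly `C₃(M) ∪ {x₁, …, x_n}`,
    (∀ y : Finset (Fin d), y.card = 3 →
      ((∃ l ∈ N (Fin.last n), y ⊆ l) ↔ ((∃ l ∈ L, y ⊆ l) ∨ ∃ i, y = x i))) ∧
    -- and `M^{x_n}` is minimal strictly above `M` among simple rank-3 matroids:
    plcDepLT L (N (Fin.last n)) ∧
    (∀ L' : Finset (Finset (Fin d)), IsPLC L' → plcDepLT L L' →
      plcDepLE L' (N (Fin.last n)) → plcDepLE (N (Fin.last n)) L') := by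
  have hcov : ∀ i j, Covers (N j) (N i) := Fin.rel_of_cyclic fun i =>
    (hN (i + 1)).covers_of_dep (hN i).1 (hN i).covers_base (hcyc i)
  have heq : ∀ i j, N i = N j := fun i j => (hN i).1.eq_of_covers (hN j).1 (hcov j i) (hcov i j)
  have hcirc : ∀ y : Finset (Fin d), y.card = 3 →
      ((∃ l ∈ N (Fin.last n), y ⊆ l) ↔ ((∃ l ∈ L, y ⊆ l) ∨ ∃ i, y = x i)) := by
    refine fun y hy => ⟨fun hyN => ?_, ?_⟩
    · by_cases hyx : ∃ i, y = x i
      · exact .inr hyx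
      · exact .inl (hno y hy (by simpa using hyx) hyN)
    · rintro (hyL | ⟨i, rfl⟩)
      · exact (hN _).covers_base.plcDepLE y hy hyL
      · exact heq _ i ▸ (hN i).dep
  refine ⟨heq, hcirc, ⟨(hN _).covers_base.plcDepLE, fun hle => ?_⟩, ?_⟩
  · obtain ⟨l, hl, hxl⟩ := hle _ (hcard (Fin.last n)) (hN _).dep
    exact hnotdep _ l hl hxl
  · rintro L' hL' ⟨hLL', hL'L⟩ hL'N
    unfold plcDepLE at hL'L
    push Not at hL'L
    obtain ⟨S, hS, hSL', hSL⟩ := hL'L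
    obtain hSL'' | ⟨i, rfl⟩ := (hcirc S hS).1 (hL'N S hS hSL')
    · obtain ⟨l, hl, hSl⟩ := hSL''
      exact absurd hSl (hSL l hl)
    · exact heq _ i ▸ (hN i).plcDepLE_of_dep hL.1 hL' hLL' hSL'
end

section
/- Let M be a point-line configuration on [d] with lines ℒ, and let x be a 3-element subset of [d] such that |x ∩ l| ≤ 1 for every line l ∈ ℒ. Then ℒ ∪ {x} is the line set of a point-line configuration; hence M^x (which equals M with line x added) is a minimal element of the set of loopless, simple matroids strictly above M in the dependency order. -/
open Finset

variable {d : ℕ}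

def depLT (M N : Matroid (Fin d)) : Prop := depLE M N ∧ ¬ depLE N M

/-- `N` is loopless and simple: it has no circuits of size 1 or 2. -/
def LooplessSimple (N : Matroid (Fin d)) : Prop :=
  ∀ S : Set (Fin d), S.ncard ≤ 2 → N.Indep S

theorem stmt17 (L : Finset (Finset (Fin d))) (hL : IsPLC L)
    (x : Finset (Fin d)) (hx : x.card = 3) (hxl : ∀ l ∈ L, (x ∩ l).card ≤ 1)
    (M : Matroid (Fin d)) (hME : M.E = Set.univ)
    (hM : ∀ S : Set (Fin d), M.Indep S ↔ plcIndep L S)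
    -- `N = M^x`, the configuration `M` with the line `x` added
    (N : Matroid (Fin d)) (hNE : N.E = Set.univ)
    (hN : ∀ S : Set (Fin d), N.Indep S ↔ plcIndep (insert x L) S) :
    -- `ℒ ∪ {x}` is the line set of a point-line configuration,
    IsPLC (insert x L) ∧
    -- and `M^x` is a minimal element of the loopless simple matroids strictly above `M`:
    depLT M N ∧ LooplessSimple N ∧
    (∀ N' : Matroid (Fin d), N'.E = Set.univ → LooplessSimple N' → depLT M N' →
      depLE N' N → depLE N N') := by
  have hMdep : ∀ S : Set (Fin d), M.Dep S ↔ ¬ plcIndep L S := by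
    intro S
    rw [Matroid.dep_iff, hM, hME]
    simp
  have hNdep : ∀ S : Set (Fin d), N.Dep S ↔ ¬ plcIndep (insert x L) S := by
    intro S
    rw [Matroid.dep_iff, hN, hNE]
    simp
  -- x is not contained in any line of L
  have hxnot : ¬ ∃ l ∈ L, (↑x : Set (Fin d)) ⊆ ↑l := by
    rintro ⟨l, hl, hsub⟩
    have hsub' : x ⊆ l := by exact_mod_cast hsub
    have : (x ∩ l).card = 3 := by rw [Finset.inter_eq_left.mpr hsub', hx]
    have := hxl l hl
    omega
  -- if S ⊆ x with ncard 3 then S = x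
  have hSeqx : ∀ S : Set (Fin d), S.ncard = 3 → S ⊆ ↑x → S = ↑x := by
    intro S hS hsub
    exact Set.eq_of_subset_of_ncard_le hsub
      (by rw [Set.ncard_coe_finset, hx, hS]) (x.finite_toSet)
  have hPLC : IsPLC (insert x L) := by
    obtain ⟨h1, h2⟩ := hL
    constructor
    · intro l hl
      rcases Finset.mem_insert.mp hl with rfl | hl
      · omega
      · exact h1 l hl
    · intro l hl l' hl' hne
      rcases Finset.mem_insert.mp hl with h1 | h1 <;>
        rcases Finset.mem_insert.mp hl' with h2' | h2'
      · exact absurd (h1.trans h2'.symm) hne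
      · rw [h1]; exact hxl l' h2'
      · rw [h2', Finset.inter_comm]; exact hxl l h1
      · exact h2 l h1 l' h2' hne
  have hLE : depLE M N := by
    intro S hS
    rw [hMdep] at hS
    rw [hNdep]
    intro ⟨ha, hb⟩
    exact hS ⟨ha, fun h3 ⟨l, hl, hsub⟩ => hb h3 ⟨l, Finset.mem_insert_of_mem hl, hsub⟩⟩
  have hxN : N.Dep ↑x := by
    rw [hNdep]
    intro ⟨_, hb⟩
    exact hb (by rw [Set.ncard_coe_finset, hx])
      ⟨x, Finset.mem_insert_self x L, subset_rfl⟩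
  have hxM : M.Indep ↑x := by
    rw [hM]
    exact ⟨by rw [Set.ncard_coe_finset, hx], fun _ => hxnot⟩
  refine ⟨hPLC, ⟨hLE, ?_⟩, ?_, ?_⟩
  · intro h
    have := h ↑x hxN
    rw [hMdep] at this
    rw [hM] at hxM
    exact this hxM
  · intro S hS
    rw [hN]
    exact ⟨by omega, fun h3 => by omega⟩
  · intro N' hN'E hN'simple ⟨hMN', hnot⟩ hN'N
    -- find a witness T dep in N' but indep in M
    have hwit : N'.Dep ↑x := by
      rw [depLE] at hnot
      push_neg at hnot
      obtain ⟨T, hTdep, hTM⟩ := hnot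
      have hTind : M.Indep T := by
        by_contra h
        rw [Matroid.dep_iff, hME] at hTM
        exact hTM ⟨h, Set.subset_univ T⟩
      rw [hM] at hTind
      obtain ⟨hT3, hTl⟩ := hTind
      have hT2 : ¬ T.ncard ≤ 2 := fun h => hTdep.not_indep (hN'simple T h)
      have hT3' : T.ncard = 3 := by omega
      have hTN : N.Dep T := hN'N T hTdep
      rw [hNdep] at hTN
      have : ∃ l ∈ insert x L, T ⊆ ↑l := by
        by_contra h
        exact hTN ⟨hT3, fun _ => h⟩
      obtain ⟨l, hl, hsub⟩ := this
      rcases Finset.mem_insert.mp hl with rfl | hl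
      · rwa [hSeqx T hT3' hsub] at hTdep
      · exact absurd ⟨l, hl, hsub⟩ (hTl hT3')
    intro S hS
    rw [hNdep] at hS
    rw [plcIndep, not_and_or] at hS
    rcases hS with h | h
    · refine hMN' S ?_
      rw [hMdep]
      intro ⟨ha, _⟩
      exact h ha
    · push_neg at h
      obtain ⟨h3, l, hl, hsub⟩ := h
      rcases Finset.mem_insert.mp hl with rfl | hl
      · rwa [hSeqx S h3 hsub]
      · refine hMN' S ?_
        rw [hMdep]
        intro ⟨_, hb⟩
        exact hb h3 ⟨l, hl, hsub⟩
end
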